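/- arXiv:2603.03055 — 13 statements merged into one kernel-verified Lean document; each statement's English description precedes it below -/
import Mathlib

section
/- Let p be a prime and n ≥ 1 a natural number. In the polynomial ring ℤ[t₁, t, x₁, …, x_{n+1}], let f = −t − x₁^{n+2} − x₂^{n+2} − ⋯ − x_{n+1}^{n+2} + (n+2)·t₁·x₁x₂⋯x_{n+1}. Then the coefficient of the monomial (x₁x₂⋯x_{n+1})^{p−1} in f^{p−1}, regarded as a polynomial in t₁ and t, equals ∑_{k=0}^{⌊(p−1)/(n+2)⌋} ((p−1)! / ((k!)^{n+2} · (p−1−(n+2)k)!)) · (−1)^{(n+2)k} · t^k · ((n+2)t₁)^{p−1−(n+2)k}. -/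
open MvPolynomial

private lemma dwork_prod_X_pow_univ {m : ℕ} {R : Type*} [CommSemiring R] (e : Fin m → ℕ) :
    ∏ i : Fin m, (X i : MvPolynomial (Fin m) R) ^ e i
      = monomial (Finsupp.equivFunOnFinite.symm e) 1 := by
  have hs : ∀ x, (Finsupp.equivFunOnFinite.symm e) x = e x := fun _ => rfl
  rw [← prod_X_pow_eq_monomial]
  simp only [hs]
  refine (Finset.prod_subset (Finset.subset_univ _) ?_).symm
  intro x _ hx
  simp only [Finsupp.mem_support_iff, not_not, hs] at hx
  simp [hx]

/-- The coefficient of `(x₁⋯x_{n+1})^{p-1}` in `f^{p-1}` for the Dwork family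
`f = -t - x₁^{n+2} - ⋯ - x_{n+1}^{n+2} + (n+2)·t₁·x₁⋯x_{n+1}`, over `ℤ[t₁,t]`. -/
theorem coeff_dwork_pow_int (p n : ℕ) (hp : p.Prime) (hn : 1 ≤ n)
    (t₁ t : MvPolynomial (Fin 2) ℤ) (ht₁ : t₁ = X 0) (ht : t = X 1)
    (f : MvPolynomial (Fin (n + 1)) (MvPolynomial (Fin 2) ℤ))
    (hf : f = - C t - (∑ i : Fin (n + 1), (X i) ^ (n + 2))
        + C (((n : MvPolynomial (Fin 2) ℤ) + 2) * t₁) * ∏ i : Fin (n + 1), X i) :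
    MvPolynomial.coeff (Finsupp.equivFunOnFinite.symm fun _ : Fin (n + 1) => p - 1)
        (f ^ (p - 1)) =
      ∑ k ∈ Finset.range ((p - 1) / (n + 2) + 1),
        ((Nat.factorial (p - 1) /
            ((Nat.factorial k) ^ (n + 2) * Nat.factorial (p - 1 - (n + 2) * k)) : ℕ) :
              MvPolynomial (Fin 2) ℤ) *
          (-1) ^ ((n + 2) * k) * t ^ k *
          (((n : MvPolynomial (Fin 2) ℤ) + 2) * t₁) ^ (p - 1 - (n + 2) * k) := by
  classical
  set N := p - 1 with hN
  set c : MvPolynomial (Fin 2) ℤ := ((n : MvPolynomial (Fin 2) ℤ) + 2) * t₁ with hc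
  set g : Fin (n + 1) ⊕ Fin 2 → MvPolynomial (Fin (n + 1)) (MvPolynomial (Fin 2) ℤ) :=
    Sum.elim (fun i => -(X i ^ (n + 2)))
      ![(-C t), C c * ∏ i : Fin (n + 1), X i] with hg
  set φ : ℕ → (Fin (n + 1) ⊕ Fin 2 → ℕ) :=
    fun q => Sum.elim (fun _ : Fin (n + 1) => q) ![q, N - (n + 2) * q] with hφ
  have hfg : f = ∑ j : Fin (n + 1) ⊕ Fin 2, g j := by
    rw [hf, Fintype.sum_sum_type, Fin.sum_univ_two]
    simp only [hg, Sum.elim_inl, Sum.elim_inr, Matrix.cons_val_zero, Matrix.cons_val_one,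
      Matrix.head_cons]
    rw [Finset.sum_neg_distrib]
    ring
  -- key computation of each product term
  have key : ∀ k : Fin (n + 1) ⊕ Fin 2 → ℕ,
      ∏ j : Fin (n + 1) ⊕ Fin 2, g j ^ k j
        = monomial (Finsupp.equivFunOnFinite.symm
            (fun i : Fin (n + 1) => (n + 2) * k (Sum.inl i) + k (Sum.inr 1)))
          ((-1) ^ ((∑ i : Fin (n + 1), k (Sum.inl i)) + k (Sum.inr 0))
            * t ^ (k (Sum.inr 0)) * c ^ (k (Sum.inr 1))) := by
    intro k
    rw [Fintype.prod_sum_type]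
    have h1 : ∀ i : Fin (n + 1), g (Sum.inl i) ^ k (Sum.inl i)
        = (-1) ^ k (Sum.inl i) * X i ^ ((n + 2) * k (Sum.inl i)) := by
      intro i; simp only [hg, Sum.elim_inl]
      rw [pow_mul]; ring
    rw [Finset.prod_congr rfl fun i _ => h1 i, Finset.prod_mul_distrib,
      Finset.prod_pow_eq_pow_sum, Fin.prod_univ_two]
    simp only [hg, Sum.elim_inr, Matrix.cons_val_zero, Matrix.cons_val_one, Matrix.head_cons]
    have hA : (-C t : MvPolynomial (Fin (n + 1)) (MvPolynomial (Fin 2) ℤ)) ^ k (Sum.inr 0)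
        = (-1) ^ k (Sum.inr 0) * C (t ^ k (Sum.inr 0)) := by
      rw [map_pow]; ring
    have hB : (C c * ∏ i : Fin (n + 1), X i) ^ k (Sum.inr 1)
        = C (c ^ k (Sum.inr 1))
          * ∏ i : Fin (n + 1), (X i : MvPolynomial (Fin (n+1)) (MvPolynomial (Fin 2) ℤ))
              ^ k (Sum.inr 1) := by
      rw [mul_pow, ← map_pow, Finset.prod_pow]
    rw [hA, hB]
    have h2 : ∀ (r s : MvPolynomial (Fin 2) ℤ),
        (((-1) ^ (∑ i : Fin (n+1), k (Sum.inl i))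
            * ∏ i : Fin (n + 1), (X i : MvPolynomial (Fin (n+1)) (MvPolynomial (Fin 2) ℤ))
                ^ ((n + 2) * k (Sum.inl i)))
          * ((-1) ^ k (Sum.inr 0) * C r * (C s * ∏ i : Fin (n+1), X i ^ k (Sum.inr 1))))
        = ((-1) ^ ((∑ i : Fin (n+1), k (Sum.inl i)) + k (Sum.inr 0)) * (C r * C s))
          * ((∏ i : Fin (n + 1), X i ^ ((n + 2) * k (Sum.inl i)))
            * ∏ i : Fin (n+1), X i ^ k (Sum.inr 1)) := by
      intro r s; rw [pow_add]; ring
    rw [h2, ← Finset.prod_mul_distrib]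
    have h3 : ∀ i ∈ Finset.univ, (X i : MvPolynomial (Fin (n+1)) (MvPolynomial (Fin 2) ℤ))
          ^ ((n + 2) * k (Sum.inl i)) * X i ^ k (Sum.inr 1)
        = X i ^ ((n + 2) * k (Sum.inl i) + k (Sum.inr 1)) := fun i _ => (pow_add _ _ _).symm
    rw [Finset.prod_congr rfl h3, dwork_prod_X_pow_univ, ← map_mul]
    have hneg : ((-1 : MvPolynomial (Fin (n+1)) (MvPolynomial (Fin 2) ℤ))) = C (-1) := by simp
    rw [hneg, ← map_pow, ← map_mul, C_mul_monomial]
    congr 1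
    ring
  -- the filtered antidiagonal is the image of `range (N/(n+2)+1)` under `φ`
  have hcq : ∀ q : ℕ, (n+1) * q + q = (n+2) * q := fun q => by ring
  have hcm : ∀ q : ℕ, (n+2) * q = q * (n+2) := fun q => mul_comm _ _
  have himage : (Finset.piAntidiag (Finset.univ : Finset (Fin (n+1) ⊕ Fin 2)) N).filter
        (fun k => (fun i : Fin (n+1) => (n+2) * k (Sum.inl i) + k (Sum.inr 1))
          = fun _ => N)
      = (Finset.range (N / (n + 2) + 1)).image φ := by
    ext k
    simp only [Finset.mem_filter, Finset.mem_piAntidiag, Finset.mem_image, Finset.mem_range,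
      funext_iff]
    constructor
    · rintro ⟨⟨hsum, -⟩, hcond⟩
      rw [Fintype.sum_sum_type, Fin.sum_univ_two] at hsum
      have hki : ∀ i : Fin (n+1), k (Sum.inl i) = k (Sum.inl 0) := by
        intro i
        have h1 := hcond i
        have h2 := hcond 0
        exact Nat.eq_of_mul_eq_mul_left (by omega : 0 < n+2) (by omega)
      have hsl : ∑ i : Fin (n+1), k (Sum.inl i) = (n+1) * k (Sum.inl 0) := by
        simp [hki, Finset.sum_const, mul_comm]
      rw [hsl] at hsum
      have h0 := hcond 0
      have hc1 := hcq (k (Sum.inl 0))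
      refine ⟨k (Sum.inl 0), ?_, ?_⟩
      · have h0' : k (Sum.inl 0) * (n+2) ≤ N := by rw [← hcm]; omega
        have := (Nat.le_div_iff_mul_le (by omega : 0 < n+2)).2 h0'
        omega
      · intro j
        rcases j with i | b
        · simp [hφ, hki i]
        · fin_cases b <;> simp [hφ] <;> omega
    · rintro ⟨q, hq, hk⟩
      have hqle : (n+2) * q ≤ N := by
        rw [hcm]
        exact (Nat.le_div_iff_mul_le (by omega : 0 < n+2)).1 (by omega)
      have hk0 : ∀ i : Fin (n+1), k (Sum.inl i) = q := by
        intro i; rw [← hk (Sum.inl i)]; simp [hφ]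
      have hk1 : k (Sum.inr 0) = q := by rw [← hk (Sum.inr 0)]; simp [hφ]
      have hk2 : k (Sum.inr 1) = N - (n+2)*q := by rw [← hk (Sum.inr 1)]; simp [hφ]
      have hc1 := hcq q
      refine ⟨⟨?_, fun _ _ => Finset.mem_univ _⟩, ?_⟩
      · rw [Fintype.sum_sum_type, Fin.sum_univ_two]
        have : ∑ i : Fin (n+1), k (Sum.inl i) = (n+1) * q := by
          simp [hk0, Finset.sum_const, mul_comm]
        omega
      · intro i
        rw [hk0 i, hk2]
        omega
  -- the multinomial coefficient at `φ q`
  have hmult : ∀ q : ℕ, (n+2) * q ≤ N →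
      Nat.multinomial (Finset.univ : Finset (Fin (n+1) ⊕ Fin 2)) (φ q)
        = N.factorial / (q.factorial ^ (n+2) * (N - (n+2)*q).factorial) := by
    intro q hqle
    rw [Nat.multinomial]
    have hsum : ∑ j : Fin (n+1) ⊕ Fin 2, φ q j = N := by
      rw [Fintype.sum_sum_type, Fin.sum_univ_two]
      simp only [hφ, Sum.elim_inl, Sum.elim_inr, Matrix.cons_val_zero, Matrix.cons_val_one,
        Matrix.head_cons, Finset.sum_const, Finset.card_univ, Fintype.card_fin, smul_eq_mul]
      have := hcq q
      omega
    rw [hsum]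
    congr 1
    rw [Fintype.prod_sum_type, Fin.prod_univ_two]
    simp only [hφ, Sum.elim_inl, Sum.elim_inr, Matrix.cons_val_zero, Matrix.cons_val_one,
      Matrix.head_cons, Finset.prod_const, Finset.card_univ, Fintype.card_fin]
    rw [← mul_assoc, ← pow_succ]
  -- put everything together
  rw [hfg, Finset.sum_pow_eq_sum_piAntidiag, coeff_sum]
  have step1 : ∀ k ∈ Finset.piAntidiag (Finset.univ : Finset (Fin (n+1) ⊕ Fin 2)) N,
      coeff (Finsupp.equivFunOnFinite.symm fun _ : Fin (n + 1) => N)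
        ((Nat.multinomial Finset.univ k : MvPolynomial (Fin (n+1)) (MvPolynomial (Fin 2) ℤ))
          * ∏ j : Fin (n + 1) ⊕ Fin 2, g j ^ k j)
      = if (fun i : Fin (n+1) => (n+2) * k (Sum.inl i) + k (Sum.inr 1)) = (fun _ => N) then
          ((Nat.multinomial Finset.univ k : ℕ) : MvPolynomial (Fin 2) ℤ)
            * ((-1) ^ ((∑ i : Fin (n + 1), k (Sum.inl i)) + k (Sum.inr 0))
              * t ^ (k (Sum.inr 0)) * c ^ (k (Sum.inr 1)))
        else 0 := by
    intro k _
    rw [key k,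
      show ((Nat.multinomial Finset.univ k : ℕ)
            : MvPolynomial (Fin (n+1)) (MvPolynomial (Fin 2) ℤ))
          = C ((Nat.multinomial Finset.univ k : ℕ) : MvPolynomial (Fin 2) ℤ)
        from (map_natCast C _).symm,
      C_mul_monomial, coeff_monomial]
    simp only [EmbeddingLike.apply_eq_iff_eq]
  rw [Finset.sum_congr rfl step1, ← Finset.sum_filter, himage,
    Finset.sum_image (fun x _ y _ h => by simpa [hφ] using congrFun h (Sum.inl 0))]
  refine Finset.sum_congr rfl fun q hq => ?_
  have hqle : (n+2) * q ≤ N := by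
    rw [hcm]
    refine (Nat.le_div_iff_mul_le (by omega : 0 < n+2)).1 ?_
    simp only [Finset.mem_range] at hq
    omega
  rw [hmult q hqle]
  simp only [hφ, Sum.elim_inl, Sum.elim_inr, Matrix.cons_val_zero, Matrix.cons_val_one,
    Matrix.head_cons, Finset.sum_const, Finset.card_univ, Fintype.card_fin, smul_eq_mul]
  rw [hcq q]
  ring
end

section
/- Let p be a prime and n ≥ 1 a natural number. In the polynomial ring 𝔽_p[t₁, t, x₁, …, x_{n+1}], let f = −t − x₁^{n+2} − ⋯ − x_{n+1}^{n+2} + (n+2)·t₁·x₁x₂⋯x_{n+1}. Then the coefficient of the monomial (x₁x₂⋯x_{n+1})^{p−1} in f^{p−1}, regarded as a polynomial in t₁ and t over 𝔽_p, equals ∑_{k=0}^{⌊(p−1)/(n+2)⌋} (((n+2)k)!/(k!)^{n+2}) · t^k · ((n+2)t₁)^{p−1−(n+2)k}, where the natural number ((n+2)k)!/(k!)^{n+2} is reduced modulo p. -/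
/-!
Expand `f ^ (p - 1)` by the multinomial theorem over the `n + 3` monomials of `f`. Comparing
exponents of each `xᵢ`, the monomial `(x₁⋯x_{n+1})^{p-1}` only comes from choosing `t` and every
`xᵢ^{n+2}` the same number `k` of times and `(n+2)t₁x₁⋯x_{n+1}` the remaining `p-1-(n+2)k` times.
The multinomial coefficient of that choice is `C(p-1,(n+2)k) · ((n+2)k)!/(k!)^{n+2}`, and
`C(p-1,m) ≡ (-1)^m (mod p)` cancels the sign `(-1)^{(n+2)k}` of the coefficients.
-/

open MvPolynomial Finset
open scoped Nat

theorem Nat.multinomial_const {α : Type*} (s : Finset α) (k : ℕ) :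
    Nat.multinomial s (fun _ => k) = (#s * k)! / k ! ^ #s := by
  simp [Nat.multinomial]

theorem Nat.multinomial_univ_option {α : Type*} [Fintype α] (f : Option α → ℕ) :
    Nat.multinomial univ f =
      (f none + ∑ a, f (some a)).choose (f none) * Nat.multinomial univ (f ∘ some) := by
  rw [univ_option]
  exact (Nat.multinomial_cons (by simp) f).trans (by simp [Nat.multinomial])

theorem CharP.cast_sub_one_choose {R : Type*} [Ring R] {p : ℕ} [CharP R p] (hp : p.Prime) :
    ∀ {k : ℕ}, k < p → ((p - 1).choose k : R) = (-1) ^ k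
  | 0, _ => by simp
  | k + 1, hk => by
    have hpascal : (p - 1).choose k + (p - 1).choose (k + 1) = p.choose (k + 1) := by
      rw [← Nat.choose_succ_succ', Nat.sub_add_cancel hp.one_le]
    have hdvd : ((p.choose (k + 1) : ℕ) : R) = 0 :=
      (CharP.cast_eq_zero_iff R p _).2 (hp.dvd_choose_self k.succ_ne_zero hk)
    rw [← hpascal, Nat.cast_add, CharP.cast_sub_one_choose hp (k.lt_succ_self.trans hk)] at hdvd
    rw [pow_succ, mul_neg_one, eq_neg_iff_add_eq_zero, add_comm, hdvd]

theorem MvPolynomial.coeff_sum_monomial_pow {σ ι R : Type*} [CommSemiring R] [DecidableEq σ]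
    [DecidableEq ι] (s : Finset ι) (d : ι → σ →₀ ℕ) (a : ι → R) (N : ℕ) (m : σ →₀ ℕ) :
    coeff m ((∑ j ∈ s, monomial (d j) (a j)) ^ N) =
      ∑ k ∈ s.piAntidiag N with ∑ j ∈ s, k j • d j = m,
        Nat.multinomial s k * ∏ j ∈ s, a j ^ k j := by
  rw [sum_pow_eq_sum_piAntidiag, coeff_sum, sum_filter]
  refine sum_congr rfl fun k _ => ?_
  simp_rw [monomial_pow, ← monomial_sum_prod, ← map_natCast (C : R →+* MvPolynomial σ R),
    C_mul_monomial, coeff_monomial]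

section Dwork

variable {R : Type*} [CommRing R] (n : ℕ)

noncomputable def dworkDegree : Option (Option (Fin (n + 1))) → Fin (n + 1) →₀ ℕ
  | none => ∑ i, Finsupp.single i 1
  | some none => 0
  | some (some i) => Finsupp.single i (n + 2)

def dworkCoeff (t c : R) : Option (Option (Fin (n + 1))) → R
  | none => c
  | some none => -t
  | some (some _) => -1

def dworkExponents (N κ : ℕ) : Option (Option (Fin (n + 1))) → ℕ
  | none => N - (n + 2) * κ
  | some _ => κ

theorem dwork_eq_sum_monomial (t c : R) :
    -C t - ∑ i : Fin (n + 1), X i ^ (n + 2) + C c * ∏ i, X i =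
      ∑ o, monomial (dworkDegree n o) (dworkCoeff n t c o) := by
  simp only [Fintype.sum_option, dworkDegree, dworkCoeff, monomial_sum_index, X_pow_eq_monomial,
    monomial_zero', map_neg, sum_neg_distrib]
  simp only [X]
  ring

theorem sum_smul_dworkDegree_apply (k : Option (Option (Fin (n + 1))) → ℕ) (i : Fin (n + 1)) :
    (∑ o, k o • dworkDegree n o) i = k none + (n + 2) * k (some (some i)) := by
  simp only [Fintype.sum_option, dworkDegree, Finsupp.smul_single, smul_zero, zero_add,
    Finsupp.coe_add, Pi.add_apply, Finsupp.coe_finsetSum, Finset.sum_apply, Finsupp.smul_apply]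
  simp [Finsupp.single_apply, mul_comm]

theorem filter_dworkDegree_eq_image (N : ℕ) :
    {k ∈ (univ : Finset (Option (Option (Fin (n + 1))))).piAntidiag N |
        ∑ o, k o • dworkDegree n o = Finsupp.equivFunOnFinite.symm fun _ => N} =
      (range (N / (n + 2) + 1)).image (dworkExponents n N) := by
  ext k
  simp only [mem_filter, mem_piAntidiag, mem_image, mem_range, Finsupp.ext_iff,
    sum_smul_dworkDegree_apply, Finsupp.coe_equivFunOnFinite_symm, mem_univ, implies_true, and_true,
    Nat.lt_succ_iff, Nat.le_div_iff_mul_le (show 0 < n + 2 by positivity)]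
  rw [Fintype.sum_option, Fintype.sum_option]
  constructor
  · rintro ⟨hsum, hdeg⟩
    have hconst (i : Fin (n + 1)) : k (some (some i)) = k (some (some 0)) :=
      Nat.eq_of_mul_eq_mul_left (Nat.succ_pos (n + 1)) (by linarith [hdeg i, hdeg 0])
    rw [sum_congr rfl fun i _ => hconst i, sum_const, card_univ, Fintype.card_fin,
      smul_eq_mul] at hsum
    have h0 := hdeg 0
    refine ⟨k (some (some 0)), by linarith, funext fun o => ?_⟩
    rcases o with _ | _ | i <;> simp only [dworkExponents, hconst]
    · omega
    · linarith
  · rintro ⟨κ, hκ, rfl⟩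
    simp only [dworkExponents, sum_const, card_univ, Fintype.card_fin, smul_eq_mul]
    have hsplit : κ + (n + 1) * κ = (n + 2) * κ := by ring
    rw [mul_comm] at hκ
    exact ⟨by omega, fun _ => by omega⟩

theorem multinomial_dworkExponents {N κ : ℕ} (h : (n + 2) * κ ≤ N) :
    Nat.multinomial univ (dworkExponents n N κ) =
      N.choose ((n + 2) * κ) * (((n + 2) * κ)! / κ ! ^ (n + 2)) := by
  have hsome : dworkExponents n N κ ∘ some = fun _ => κ := rfl
  rw [Nat.multinomial_univ_option, hsome, Nat.multinomial_const]
  simp only [dworkExponents, sum_const, card_univ, Fintype.card_option, Fintype.card_fin,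
    smul_eq_mul, Nat.sub_add_cancel h, Nat.choose_symm h]

theorem prod_dworkCoeff_pow (t c : R) (N κ : ℕ) :
    ∏ o, dworkCoeff n t c o ^ dworkExponents n N κ o =
      (-1) ^ ((n + 2) * κ) * t ^ κ * c ^ (N - (n + 2) * κ) := by
  simp only [Fintype.prod_option, dworkCoeff, dworkExponents, prod_const, card_univ,
    Fintype.card_fin]
  ring

theorem coeff_dwork_pow (t c : R) (N : ℕ) :
    coeff (Finsupp.equivFunOnFinite.symm fun _ => N)
        ((-C t - ∑ i : Fin (n + 1), X i ^ (n + 2) + C c * ∏ i, X i) ^ N) =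
      ∑ κ ∈ range (N / (n + 2) + 1),
        (-1) ^ ((n + 2) * κ) * (N.choose ((n + 2) * κ) : R) *
          ((((n + 2) * κ)! / κ ! ^ (n + 2) : ℕ) : R) * t ^ κ * c ^ (N - (n + 2) * κ) := by
  rw [dwork_eq_sum_monomial, coeff_sum_monomial_pow, filter_dworkDegree_eq_image,
    sum_image fun a _ b _ h => congrFun h (some none)]
  refine sum_congr rfl fun κ hκ => ?_
  rw [mem_range, Nat.lt_succ_iff, Nat.le_div_iff_mul_le (by positivity), mul_comm] at hκ
  rw [multinomial_dworkExponents n hκ, prod_dworkCoeff_pow]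
  push_cast
  ring

end Dwork

theorem coeff_dwork_pow_zmod_general (p n : ℕ) (hp : p.Prime)
    (t₁ t : MvPolynomial (Fin 2) (ZMod p))
    (f : MvPolynomial (Fin (n + 1)) (MvPolynomial (Fin 2) (ZMod p)))
    (hf : f = - C t - (∑ i : Fin (n + 1), (X i) ^ (n + 2))
        + C (((n : MvPolynomial (Fin 2) (ZMod p)) + 2) * t₁) * ∏ i : Fin (n + 1), X i) :
    MvPolynomial.coeff (Finsupp.equivFunOnFinite.symm fun _ : Fin (n + 1) => p - 1)
        (f ^ (p - 1)) =
      ∑ k ∈ Finset.range ((p - 1) / (n + 2) + 1),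
        ((Nat.factorial ((n + 2) * k) / (Nat.factorial k) ^ (n + 2) : ℕ) :
              MvPolynomial (Fin 2) (ZMod p)) *
          t ^ k *
          (((n : MvPolynomial (Fin 2) (ZMod p)) + 2) * t₁) ^ (p - 1 - (n + 2) * k) := by
  rw [hf, coeff_dwork_pow]
  refine sum_congr rfl fun κ hκ => ?_
  rw [mem_range, Nat.lt_succ_iff, Nat.le_div_iff_mul_le (by positivity), mul_comm] at hκ
  have hlt : (n + 2) * κ < p := by have := hp.two_le; omega
  rw [CharP.cast_sub_one_choose hp hlt, ← pow_add, Even.neg_one_pow ⟨_, rfl⟩, one_mul]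

/-- The coefficient of `(x₁⋯x_{n+1})^{p-1}` in `f^{p-1}` for the Dwork family over `𝔽_p[t₁,t]`:
it equals the Hasse–Witt invariant
`∑_k ((n+2)k)!/(k!)^{n+2} · t^k · ((n+2)t₁)^{p-1-(n+2)k}` reduced modulo `p`. -/
theorem coeff_dwork_pow_zmod (p n : ℕ) (hp : p.Prime) (hn : 1 ≤ n)
    (t₁ t : MvPolynomial (Fin 2) (ZMod p)) (ht₁ : t₁ = X 0) (ht : t = X 1)
    (f : MvPolynomial (Fin (n + 1)) (MvPolynomial (Fin 2) (ZMod p)))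
    (hf : f = - C t - (∑ i : Fin (n + 1), (X i) ^ (n + 2))
        + C (((n : MvPolynomial (Fin 2) (ZMod p)) + 2) * t₁) * ∏ i : Fin (n + 1), X i) :
    MvPolynomial.coeff (Finsupp.equivFunOnFinite.symm fun _ : Fin (n + 1) => p - 1)
        (f ^ (p - 1)) =
      ∑ k ∈ Finset.range ((p - 1) / (n + 2) + 1),
        ((Nat.factorial ((n + 2) * k) / (Nat.factorial k) ^ (n + 2) : ℕ) :
              MvPolynomial (Fin 2) (ZMod p)) *
          t ^ k *
          (((n : MvPolynomial (Fin 2) (ZMod p)) + 2) * t₁) ^ (p - 1 - (n + 2) * k) :=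
  coeff_dwork_pow_zmod_general p n hp t₁ t f hf
end

section
/- Let p be a prime. In the polynomial ring ℤ[t₁, t, x₁, x₂, x₃, x₄], let f = −1 − x₁⁵ − t·x₂¹⁰ − x₃¹⁰ − x₄¹⁰ + t₁·x₁x₂x₃x₄. Then the coefficient of the monomial (x₁x₂x₃x₄)^{p−1} in f^{p−1}, regarded as a polynomial in t₁ and t, equals ∑_{k=0}^{⌊(p−1)/10⌋} ((p−1)! / ((k!)³ · (2k)! · (5k)! · (p−1−10k)!)) · t^k · t₁^{p−1−10k}. -/
open MvPolynomial Finset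

/-- The coefficient of `(x₁x₂x₃x₄)^{p-1}` in `f^{p-1}` for the Calabi–Yau family in
`ℙ^{5,2,1,1,1}`, `f = -1 - x₁⁵ - t·x₂¹⁰ - x₃¹⁰ - x₄¹⁰ + t₁·x₁x₂x₃x₄`, over `ℤ[t₁,t]`. -/
theorem coeff_P52111_pow_int (p : ℕ) (hp : p.Prime)
    (t₁ t : MvPolynomial (Fin 2) ℤ) (ht₁ : t₁ = X 0) (ht : t = X 1)
    (f : MvPolynomial (Fin 4) (MvPolynomial (Fin 2) ℤ))
    (hf : f = - 1 - (X 0) ^ 5 - C t * (X 1) ^ 10 - (X 2) ^ 10 - (X 3) ^ 10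
        + C t₁ * (X 0 * X 1 * X 2 * X 3)) :
    MvPolynomial.coeff (Finsupp.equivFunOnFinite.symm fun _ : Fin 4 => p - 1)
        (f ^ (p - 1)) =
      ∑ k ∈ Finset.range ((p - 1) / 10 + 1),
        ((Nat.factorial (p - 1) /
            ((Nat.factorial k) ^ 3 * Nat.factorial (2 * k) * Nat.factorial (5 * k) *
              Nat.factorial (p - 1 - 10 * k)) : ℕ) : MvPolynomial (Fin 2) ℤ) *
          t ^ k * t₁ ^ (p - 1 - 10 * k) := by
  set n := p - 1 with hn
  set d : Fin 4 →₀ ℕ := Finsupp.equivFunOnFinite.symm fun _ : Fin 4 => n with hd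
  set g : Fin 6 → MvPolynomial (Fin 4) (MvPolynomial (Fin 2) ℤ) :=
    ![monomial 0 (-1), monomial (Finsupp.single 0 5) (-1),
      monomial (Finsupp.single 1 10) (-t), monomial (Finsupp.single 2 10) (-1),
      monomial (Finsupp.single 3 10) (-1),
      monomial (Finsupp.single 0 1 + Finsupp.single 1 1 + Finsupp.single 2 1
        + Finsupp.single 3 1) t₁] with hg
  have e0 : g 0 = monomial 0 (-1) := rfl
  have e1 : g 1 = monomial (Finsupp.single 0 5) (-1) := rfl
  have e2 : g 2 = monomial (Finsupp.single 1 10) (-t) := rfl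
  have e3 : g 3 = monomial (Finsupp.single 2 10) (-1) := rfl
  have e4 : g 4 = monomial (Finsupp.single 3 10) (-1) := rfl
  have e5 : g 5 = monomial (Finsupp.single 0 1 + Finsupp.single 1 1 + Finsupp.single 2 1
      + Finsupp.single 3 1) t₁ := rfl
  have hf6 : f = ∑ i : Fin 6, g i := by
    have hX : ∀ i : Fin 4, (X i : MvPolynomial (Fin 4) (MvPolynomial (Fin 2) ℤ)) = monomial (Finsupp.single i 1) 1 :=
      fun i => rfl
    rw [hf]
    simp only [Fin.sum_univ_six, e0, e1, e2, e3, e4, e5, hX, monomial_pow, monomial_mul,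
      C_mul_monomial, map_neg, monomial_zero', map_one, C_1, one_pow, mul_one, one_mul,
      Finsupp.smul_single, smul_eq_mul, mul_one, Nat.reduceMul]
    ring
  have hprod : ∀ k : Fin 6 → ℕ, (∏ i, g i ^ k i) =
      monomial (k 1 • Finsupp.single 0 5 + k 2 • Finsupp.single 1 10
        + k 3 • Finsupp.single 2 10 + k 4 • Finsupp.single 3 10
        + k 5 • (Finsupp.single 0 1 + Finsupp.single 1 1 + Finsupp.single 2 1
        + Finsupp.single 3 1))
        ((-1) ^ (k 0) * (-1) ^ (k 1) * (-t) ^ (k 2) * (-1) ^ (k 3) * (-1) ^ (k 4)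
          * t₁ ^ (k 5)) := by
    intro k
    simp only [Fin.prod_univ_six, e0, e1, e2, e3, e4, e5,
      monomial_pow, monomial_mul, smul_zero, zero_add]
  -- characterize the exponent condition
  have hEd : ∀ k : Fin 6 → ℕ,
      (k 1 • Finsupp.single 0 5 + k 2 • Finsupp.single 1 10
        + k 3 • Finsupp.single 2 10 + k 4 • Finsupp.single 3 10
        + k 5 • (Finsupp.single 0 1 + Finsupp.single 1 1 + Finsupp.single 2 1
        + Finsupp.single 3 1) = d) ↔
      (5 * k 1 + k 5 = n ∧ 10 * k 2 + k 5 = n ∧ 10 * k 3 + k 5 = n ∧ 10 * k 4 + k 5 = n) := by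
    intro k
    have hdj : ∀ j : Fin 4, d j = n := fun j => rfl
    rw [DFunLike.ext_iff]
    constructor
    · intro h
      have h0 := h 0
      have h1 := h 1
      have h2 := h 2
      have h3 := h 3
      simp [Finsupp.single_apply, hdj, mul_comm] at h0 h1 h2 h3
      exact ⟨by omega, by omega, by omega, by omega⟩
    · rintro ⟨h0, h1, h2, h3⟩ j
      fin_cases j <;> simp [Finsupp.single_apply, hdj, mul_comm] <;> omega
  rw [hf6, Finset.sum_pow_eq_sum_piAntidiag, MvPolynomial.coeff_sum]
  have hco : ∀ k : Fin 6 → ℕ,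
      MvPolynomial.coeff d ((Nat.multinomial Finset.univ k : MvPolynomial (Fin 4)
          (MvPolynomial (Fin 2) ℤ)) * ∏ i, g i ^ k i) =
      if (k 1 • Finsupp.single 0 5 + k 2 • Finsupp.single 1 10
        + k 3 • Finsupp.single 2 10 + k 4 • Finsupp.single 3 10
        + k 5 • (Finsupp.single 0 1 + Finsupp.single 1 1 + Finsupp.single 2 1
        + Finsupp.single 3 1) = d) then
        (Nat.multinomial Finset.univ k : MvPolynomial (Fin 2) ℤ) *
          ((-1) ^ (k 0) * (-1) ^ (k 1) * (-t) ^ (k 2) * (-1) ^ (k 3) * (-1) ^ (k 4)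
            * t₁ ^ (k 5))
      else 0 := by
    intro k
    rw [hprod, ← C_eq_coe_nat, C_mul_monomial, coeff_monomial]
  simp only [hco]
  rw [← Finset.sum_filter]
  refine Finset.sum_nbij' (fun k => k 2)
    (fun m => ![5 * m, 2 * m, m, m, m, n - 10 * m]) ?_ ?_ ?_ ?_ ?_
  · intro k hk
    simp only [Finset.mem_filter, Finset.mem_piAntidiag, Fin.sum_univ_six, hEd] at hk
    simp only [Finset.mem_range]
    omega
  · intro m hm
    simp only [Finset.mem_range] at hm
    simp only [Finset.mem_filter, Finset.mem_piAntidiag, Fin.sum_univ_six, hEd]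
    refine ⟨⟨?_, fun _ _ => Finset.mem_univ _⟩, ?_, ?_, ?_, ?_⟩
    · show 5 * m + 2 * m + m + m + m + (n - 10 * m) = n
      omega
    · show 5 * (2 * m) + (n - 10 * m) = n
      omega
    · show 10 * m + (n - 10 * m) = n
      omega
    · show 10 * m + (n - 10 * m) = n
      omega
    · show 10 * m + (n - 10 * m) = n
      omega
  · intro k hk
    simp only [Finset.mem_filter, Finset.mem_piAntidiag, Fin.sum_univ_six, hEd] at hk
    funext i
    fin_cases i
    · show 5 * k 2 = k 0
      omega
    · show 2 * k 2 = k 1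
      omega
    · show k 2 = k 2
      rfl
    · show k 2 = k 3
      omega
    · show k 2 = k 4
      omega
    · show n - 10 * k 2 = k 5
      omega
  · intro m _
    rfl
  · intro k hk
    simp only [Finset.mem_filter, Finset.mem_piAntidiag, Fin.sum_univ_six, hEd] at hk
    obtain ⟨⟨hsum, -⟩, h0, h1, h2, h3⟩ := hk
    set m := k 2 with hm
    have hk1 : k 1 = 2 * m := by omega
    have hk3 : k 3 = m := by omega
    have hk4 : k 4 = m := by omega
    have hk5 : k 5 = n - 10 * m := by omega
    have hk0 : k 0 = 5 * m := by omega
    have h10 : 10 * m ≤ n := by omega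
    have hmult : Nat.multinomial Finset.univ k =
        n.factorial / (m.factorial ^ 3 * (2 * m).factorial * (5 * m).factorial *
          (n - 10 * m).factorial) := by
      rw [Nat.multinomial]
      have hs : ∑ i, k i = n := by rw [Fin.sum_univ_six]; omega
      rw [hs, Fin.prod_univ_six, hk0, hk1, hk3, hk4, hk5]
      congr 1
      ring
    have hsgn : ((-1 : MvPolynomial (Fin 2) ℤ)) ^ (5 * m) * (-1) ^ (2 * m) * (-1) ^ m
        * (-1) ^ m * (-1) ^ m = 1 := by
      rw [← pow_add, ← pow_add, ← pow_add, ← pow_add]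
      rw [show 5 * m + 2 * m + m + m + m = 2 * (5 * m) by ring, pow_mul, neg_one_sq, one_pow]
    rw [hk0, hk1, hk3, hk4, hk5, hmult, neg_pow t]
    rw [show ((-1 : MvPolynomial (Fin 2) ℤ)) ^ (5 * m) * (-1) ^ (2 * m) * ((-1) ^ m * t ^ m)
        * (-1) ^ m * (-1) ^ m * t₁ ^ (n - 10 * m) = ((-1 : MvPolynomial (Fin 2) ℤ)) ^ (5 * m)
        * (-1) ^ (2 * m) * (-1) ^ m * (-1) ^ m * (-1) ^ m * (t ^ m * t₁ ^ (n - 10 * m)) by ring]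
    rw [hsgn, one_mul]
    exact (mul_assoc _ _ _).symm
end

section
/- Let p be a prime. In the polynomial ring ℤ[t₁, t, x₁, x₂, x₃, x₄], let f = −1 − t·x₁⁸ − x₂⁸ − x₃⁸ − x₄⁸ + t₁·x₁x₂x₃x₄. Then the coefficient of the monomial (x₁x₂x₃x₄)^{p−1} in f^{p−1}, regarded as a polynomial in t₁ and t, equals ∑_{k=0}^{⌊(p−1)/8⌋} ((p−1)! / ((k!)⁴ · (4k)! · (p−1−8k)!)) · t^k · t₁^{p−1−8k}. -/
/-!
Write `f` as the sum of its six monomials `-1, -t x₁⁸, -x₂⁸, -x₃⁸, -x₄⁸, t₁ x₁x₂x₃x₄` and expand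
`f ^ n` by the multinomial theorem. An exponent vector `(a₀, …, a₅)` with sum `n` yields the
monomial `(x₁x₂x₃x₄)ⁿ` iff `8 aⱼ + a₅ = n` for every `j`, which forces
`a = (4r, r, r, r, r, n - 8r)` with `8r ≤ n`; its sign `(-1)^(4r + r + 3r)` is `+1`.
-/

open MvPolynomial Finset Nat

namespace MvPolynomial

variable {σ ι R : Type*} [CommSemiring R] [DecidableEq σ]

theorem coeff_sum_monomial_pow_s4 [DecidableEq ι] (s : Finset ι) (v : ι → σ →₀ ℕ) (c : ι → R)
    (n : ℕ) (d : σ →₀ ℕ) :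
    coeff d ((∑ i ∈ s, monomial (v i) (c i)) ^ n) =
      ∑ a ∈ s.piAntidiag n with ∑ i ∈ s, a i • v i = d,
        (Nat.multinomial s a : R) * ∏ i ∈ s, c i ^ a i := by
  rw [sum_pow_eq_sum_piAntidiag, coeff_sum, sum_filter]
  refine sum_congr rfl fun a _ => ?_
  simp_rw [monomial_pow, ← monomial_sum_prod, ← map_natCast (C : R →+* MvPolynomial σ R),
    C_mul_monomial, coeff_monomial]

end MvPolynomial

namespace P41111

variable {R : Type*} [CommRing R]

noncomputable def family (t₁ t : R) : MvPolynomial (Fin 4) R :=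
  -1 - C t * X 0 ^ 8 - X 1 ^ 8 - X 2 ^ 8 - X 3 ^ 8 + C t₁ * (X 0 * X 1 * X 2 * X 3)

noncomputable def monomialExponent : Fin 6 → Fin 4 →₀ ℕ :=
  ![0, .single 0 8, .single 1 8, .single 2 8, .single 3 8,
    .single 0 1 + .single 1 1 + .single 2 1 + .single 3 1]

def monomialCoeff (t₁ t : R) : Fin 6 → R := ![-1, -t, -1, -1, -1, t₁]

theorem family_eq_sum_monomial (t₁ t : R) :
    family t₁ t = ∑ i, monomial (monomialExponent i) (monomialCoeff t₁ t i) := by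
  simp only [family, Fin.sum_univ_six, monomialExponent, monomialCoeff, Matrix.cons_val_zero,
    Matrix.cons_val_one, Matrix.cons_val, X, monomial_pow, monomial_mul, C_mul_monomial,
    Finsupp.smul_single, smul_eq_mul, one_pow, mul_one, monomial_zero', map_neg, C_1]
  ring

def diagonalSolution (n r : ℕ) : Fin 6 → ℕ := ![4 * r, r, r, r, r, n - 8 * r]

theorem diagonalSolution_injective (n : ℕ) : Function.Injective (diagonalSolution n) :=
  fun _ _ h => congr_fun h 1

theorem sum_smul_monomialExponent_apply (a : Fin 6 → ℕ) (j : Fin 4) :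
    (∑ i, a i • monomialExponent i) j = 8 * a j.castSucc.succ + a 5 := by
  fin_cases j <;> simp [Fin.sum_univ_six, monomialExponent, mul_comm]

theorem filter_piAntidiag_eq_image_diagonalSolution (n : ℕ) :
    {a ∈ (univ : Finset (Fin 6)).piAntidiag n |
      ∑ i, a i • monomialExponent i = Finsupp.equivFunOnFinite.symm fun _ => n} =
      (range (n / 8 + 1)).image (diagonalSolution n) := by
  ext a
  simp only [mem_filter, DFunLike.ext_iff, sum_smul_monomialExponent_apply,
    Finsupp.equivFunOnFinite_symm_apply_apply]
  simp only [mem_piAntidiag, mem_image, mem_range, Fin.sum_univ_six, mem_univ, implies_true,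
    and_true, Fin.forall_fin_succ, IsEmpty.forall_iff, Fin.reduceSucc, Fin.reduceCastSucc,
    Fin.isValue, funext_iff, diagonalSolution, Matrix.cons_val]
  constructor
  · intro h
    exact ⟨a 1, by omega⟩
  · rintro ⟨r, hr, h⟩
    omega

theorem multinomial_diagonalSolution {n r : ℕ} (h : 8 * r ≤ n) :
    Nat.multinomial univ (diagonalSolution n r) =
      n ! / (r ! ^ 4 * (4 * r)! * (n - 8 * r)!) := by
  rw [Nat.multinomial, Fin.sum_univ_six, Fin.prod_univ_six]
  simp only [diagonalSolution, Matrix.cons_val_zero, Matrix.cons_val_one, Matrix.cons_val]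
  rw [show 4 * r + r + r + r + r + (n - 8 * r) = n by omega]
  congr 1
  ring

theorem prod_monomialCoeff_pow_diagonalSolution (t₁ t : R) (n r : ℕ) :
    ∏ i, monomialCoeff t₁ t i ^ diagonalSolution n r i = t ^ r * t₁ ^ (n - 8 * r) := by
  simp only [Fin.prod_univ_six, monomialCoeff, diagonalSolution, Matrix.cons_val_zero,
    Matrix.cons_val_one, Matrix.cons_val]
  have h : (-1 : R) ^ (8 * r) = 1 := Even.neg_one_pow ⟨4 * r, by ring⟩
  linear_combination t ^ r * t₁ ^ (n - 8 * r) * h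

theorem coeff_diagonal_family_pow (t₁ t : R) (n : ℕ) :
    coeff (Finsupp.equivFunOnFinite.symm fun _ => n) (family t₁ t ^ n) =
      ∑ k ∈ range (n / 8 + 1),
        ((n ! / (k ! ^ 4 * (4 * k)! * (n - 8 * k)!) : ℕ) : R) * t ^ k * t₁ ^ (n - 8 * k) := by
  rw [family_eq_sum_monomial, coeff_sum_monomial_pow_s4, filter_piAntidiag_eq_image_diagonalSolution,
    sum_image (diagonalSolution_injective n).injOn]
  refine sum_congr rfl fun k hk => ?_
  rw [multinomial_diagonalSolution (by rw [mem_range] at hk; omega),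
    prod_monomialCoeff_pow_diagonalSolution, ← mul_assoc]

end P41111

theorem coeff_P41111_pow_int_general (p : ℕ)
    (t₁ t : MvPolynomial (Fin 2) ℤ)
    (f : MvPolynomial (Fin 4) (MvPolynomial (Fin 2) ℤ))
    (hf : f = - 1 - C t * (X 0) ^ 8 - (X 1) ^ 8 - (X 2) ^ 8 - (X 3) ^ 8
        + C t₁ * (X 0 * X 1 * X 2 * X 3)) :
    MvPolynomial.coeff (Finsupp.equivFunOnFinite.symm fun _ : Fin 4 => p - 1)
        (f ^ (p - 1)) =
      ∑ k ∈ Finset.range ((p - 1) / 8 + 1),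
        ((Nat.factorial (p - 1) /
            ((Nat.factorial k) ^ 4 * Nat.factorial (4 * k) *
              Nat.factorial (p - 1 - 8 * k)) : ℕ) : MvPolynomial (Fin 2) ℤ) *
          t ^ k * t₁ ^ (p - 1 - 8 * k) := by
  subst hf
  exact P41111.coeff_diagonal_family_pow t₁ t (p - 1)

/-- The coefficient of `(x₁x₂x₃x₄)^{p-1}` in `f^{p-1}` for the Calabi–Yau family in
`ℙ^{4,1,1,1,1}`, `f = -1 - t·x₁⁸ - x₂⁸ - x₃⁸ - x₄⁸ + t₁·x₁x₂x₃x₄`, over `ℤ[t₁,t]`. -/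
theorem coeff_P41111_pow_int (p : ℕ) (hp : p.Prime)
    (t₁ t : MvPolynomial (Fin 2) ℤ) (ht₁ : t₁ = X 0) (ht : t = X 1)
    (f : MvPolynomial (Fin 4) (MvPolynomial (Fin 2) ℤ))
    (hf : f = - 1 - C t * (X 0) ^ 8 - (X 1) ^ 8 - (X 2) ^ 8 - (X 3) ^ 8
        + C t₁ * (X 0 * X 1 * X 2 * X 3)) :
    MvPolynomial.coeff (Finsupp.equivFunOnFinite.symm fun _ : Fin 4 => p - 1)
        (f ^ (p - 1)) =
      ∑ k ∈ Finset.range ((p - 1) / 8 + 1),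
        ((Nat.factorial (p - 1) /
            ((Nat.factorial k) ^ 4 * Nat.factorial (4 * k) *
              Nat.factorial (p - 1 - 8 * k)) : ℕ) : MvPolynomial (Fin 2) ℤ) *
          t ^ k * t₁ ^ (p - 1 - 8 * k) :=
  coeff_P41111_pow_int_general p t₁ t f hf
end

section
/- Let p be an odd prime. In the polynomial ring 𝔽_p[t₁, t, x₁, x₂, x₃, x₄], let f = −1 − t·x₁⁸ − x₂⁸ − x₃⁸ − x₄⁸ + t₁·x₁x₂x₃x₄. Then the coefficient of the monomial (x₁x₂x₃x₄)^{p−1} in f^{p−1}, regarded as a polynomial in t₁ and t over 𝔽_p, equals ∑_{k=0}^{⌊(p−1)/8⌋} ((8k)!/((k!)⁴(4k)!)) · t^k · t₁^{p−1−8k}, where the natural number (8k)!/((k!)⁴(4k)!) is reduced modulo p. -/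
open MvPolynomial

open Finset

noncomputable def ddCY : Fin 6 → (Fin 4 →₀ ℕ) :=
  ![0, Finsupp.single 0 8, Finsupp.single 1 8, Finsupp.single 2 8, Finsupp.single 3 8,
    Finsupp.single 0 1 + Finsupp.single 1 1 + Finsupp.single 2 1 + Finsupp.single 3 1]

noncomputable def ccCY (p : ℕ) : Fin 6 → MvPolynomial (Fin 2) (ZMod p) :=
  ![-1, -(X 1), -1, -1, -1, X 0]

lemma dd0 : ddCY 0 = 0 := rfl
lemma dd1 : ddCY 1 = Finsupp.single 0 8 := rfl
lemma dd2 : ddCY 2 = Finsupp.single 1 8 := rfl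
lemma dd3 : ddCY 3 = Finsupp.single 2 8 := rfl
lemma dd4 : ddCY 4 = Finsupp.single 3 8 := rfl
lemma dd5 : ddCY 5 = Finsupp.single 0 1 + Finsupp.single 1 1 + Finsupp.single 2 1
    + Finsupp.single 3 1 := rfl
lemma cc0 (p : ℕ) : ccCY p 0 = -1 := rfl
lemma cc1 (p : ℕ) : ccCY p 1 = -(X 1) := rfl
lemma cc2 (p : ℕ) : ccCY p 2 = -1 := rfl
lemma cc3 (p : ℕ) : ccCY p 3 = -1 := rfl
lemma cc4 (p : ℕ) : ccCY p 4 = -1 := rfl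
lemma cc5 (p : ℕ) : ccCY p 5 = X 0 := rfl

lemma fCY_eq (p : ℕ) :
    (- 1 - C (X 1) * (X 0) ^ 8 - (X 1) ^ 8 - (X 2) ^ 8 - (X 3) ^ 8
        + C (X 0) * (X 0 * X 1 * X 2 * X 3)
      : MvPolynomial (Fin 4) (MvPolynomial (Fin 2) (ZMod p)))
      = ∑ i : Fin 6, monomial (ddCY i) (ccCY p i) := by
  rw [Fin.sum_univ_six, dd0, dd1, dd2, dd3, dd4, dd5, cc0, cc1, cc2, cc3, cc4, cc5,
    monomial_zero']
  simp only [map_neg, map_one, monomial_add_single, ← C_mul_X_pow_eq_monomial, pow_one]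
  ring

lemma prodCY (p : ℕ) (v : Fin 6 → ℕ) :
    (∏ i : Fin 6, monomial (ddCY i) (ccCY p i) ^ v i) =
      monomial (∑ i : Fin 6, v i • ddCY i) (∏ i : Fin 6, ccCY p i ^ v i) := by
  rw [Fin.prod_univ_six, Fin.prod_univ_six, Fin.sum_univ_six]
  simp only [monomial_pow, monomial_mul]

lemma E0CY (v : Fin 6 → ℕ) : (∑ i : Fin 6, v i • ddCY i) 0 = 8 * v 1 + v 5 := by
  rw [Fin.sum_univ_six, dd0, dd1, dd2, dd3, dd4, dd5]
  simp [Finsupp.single_apply]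
  ring

lemma E1CY (v : Fin 6 → ℕ) : (∑ i : Fin 6, v i • ddCY i) 1 = 8 * v 2 + v 5 := by
  rw [Fin.sum_univ_six, dd0, dd1, dd2, dd3, dd4, dd5]
  simp [Finsupp.single_apply]
  ring

lemma E2CY (v : Fin 6 → ℕ) : (∑ i : Fin 6, v i • ddCY i) 2 = 8 * v 3 + v 5 := by
  rw [Fin.sum_univ_six, dd0, dd1, dd2, dd3, dd4, dd5]
  simp [Finsupp.single_apply]
  ring

lemma E3CY (v : Fin 6 → ℕ) : (∑ i : Fin 6, v i • ddCY i) 3 = 8 * v 4 + v 5 := by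
  rw [Fin.sum_univ_six, dd0, dd1, dd2, dd3, dd4, dd5]
  simp [Finsupp.single_apply]
  ring

lemma prodvalCY (p k m : ℕ) :
    (∏ i : Fin 6, ccCY p i ^ (![4*k,k,k,k,k,m] i)) =
      (X 1 : MvPolynomial (Fin 2) (ZMod p))^k * (X 0)^m := by
  rw [Fin.prod_univ_six]
  show ((-1 : MvPolynomial (Fin 2) (ZMod p)))^(4*k) * (-(X 1))^k * (-1)^k * (-1)^k * (-1)^k
      * (X 0)^m = _
  rw [show (-(X 1) : MvPolynomial (Fin 2) (ZMod p))^k = (-1)^k * X 1^k by rw [neg_pow]]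
  have h : ((-1 : MvPolynomial (Fin 2) (ZMod p)))^(4*k) *
      ((-1)^k * ((-1)^k * ((-1)^k * (-1)^k))) = 1 := by
    rw [← pow_add, ← pow_add, ← pow_add, ← pow_add,
      show 4*k+(k+(k+(k+k))) = 2*(4*k) by ring, pow_mul, neg_one_sq, one_pow]
  calc ((-1 : MvPolynomial (Fin 2) (ZMod p)))^(4*k) * ((-1)^k * X 1 ^ k) * (-1)^k * (-1)^k
        * (-1)^k * (X 0)^m
      = (((-1))^(4*k) * ((-1)^k * ((-1)^k * ((-1)^k * (-1)^k)))) * (X 1 ^ k * X 0 ^ m) := by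
        ring
    _ = X 1 ^ k * X 0 ^ m := by rw [h, one_mul]

lemma aux_choose (p : ℕ) (hp : p.Prime) : ∀ k, k ≤ p - 1 → ((p-1).choose k : ZMod p) = (-1)^k := by
  intro k
  induction k with
  | zero => simp
  | succ k ih =>
    intro hk
    have hk' : k ≤ p - 1 := le_of_lt (lt_of_lt_of_le (Nat.lt_succ_self k) hk)
    have hp1 : p - 1 + 1 = p := Nat.succ_pred_eq_of_pos hp.pos
    have h0 : ((p.choose (k+1) : ℕ) : ZMod p) = 0 := by
      rw [ZMod.natCast_eq_zero_iff]
      exact Nat.Prime.dvd_choose_self hp (Nat.succ_ne_zero k)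
        (lt_of_le_of_lt hk (Nat.sub_lt hp.pos one_pos))
    have hpas : p.choose (k+1) = (p-1).choose k + (p-1).choose (k+1) := by
      conv_lhs => rw [← hp1]
      exact Nat.choose_succ_succ _ _
    have h2 : ((p-1).choose k : ZMod p) + ((p-1).choose (k+1) : ZMod p) = 0 := by
      rw [← Nat.cast_add, ← hpas, h0]
    rw [eq_neg_of_add_eq_zero_right h2, ih hk', pow_succ]
    ring

lemma multCY_inner (k : ℕ) :
    Nat.multinomial ({0,1,2,3,4} : Finset (Fin 6)) ![4*k,k,k,k,k,0] =
      Nat.factorial (8*k) / ((Nat.factorial k)^4 * Nat.factorial (4*k)) := by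
  rw [Nat.multinomial]
  rw [show ∑ i ∈ ({0,1,2,3,4} : Finset (Fin 6)), (![4*k,k,k,k,k,0] : Fin 6 → ℕ) i
      = 8 * k by
    rw [Finset.sum_insert (by decide), Finset.sum_insert (by decide),
      Finset.sum_insert (by decide), Finset.sum_insert (by decide), Finset.sum_singleton]
    show 4*k + (k + (k + (k + k))) = 8 * k
    ring]
  congr 1
  rw [Finset.prod_insert (by decide), Finset.prod_insert (by decide),
    Finset.prod_insert (by decide), Finset.prod_insert (by decide), Finset.prod_singleton]
  show (4*k).factorial * (k.factorial * (k.factorial * (k.factorial * k.factorial))) = _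
  ring

lemma multCY (p : ℕ) (hp : p.Prime) (k : ℕ) (hk : 8 * k ≤ p - 1) :
    ((Nat.multinomial (Finset.univ : Finset (Fin 6)) ![4*k,k,k,k,k,p-1-8*k]) : ZMod p) =
      ((Nat.factorial (8*k) / ((Nat.factorial k)^4 * Nat.factorial (4*k)) : ℕ) : ZMod p) := by
  have huniv : (Finset.univ : Finset (Fin 6)) = insert 5 ({0,1,2,3,4} : Finset (Fin 6)) := by
    decide
  rw [huniv, Nat.multinomial_insert (by decide)]
  rw [show ∑ i ∈ ({0,1,2,3,4} : Finset (Fin 6)), (![4*k,k,k,k,k,p-1-8*k] : Fin 6 → ℕ) i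
      = 8 * k by
    rw [Finset.sum_insert (by decide), Finset.sum_insert (by decide),
      Finset.sum_insert (by decide), Finset.sum_insert (by decide), Finset.sum_singleton]
    show 4*k + (k + (k + (k + k))) = 8 * k
    ring]
  have h5 : (![4*k,k,k,k,k,p-1-8*k] : Fin 6 → ℕ) 5 = p - 1 - 8*k := rfl
  rw [h5, Nat.sub_add_cancel hk]
  have hinner : Nat.multinomial ({0,1,2,3,4} : Finset (Fin 6)) ![4*k,k,k,k,k,p-1-8*k]
      = Nat.factorial (8*k) / ((Nat.factorial k)^4 * Nat.factorial (4*k)) := by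
    rw [← multCY_inner k]
    apply Nat.multinomial_congr
    intro a ha
    fin_cases ha <;> rfl
  rw [hinner, Nat.cast_mul, Nat.choose_symm hk,
    aux_choose p hp (8*k) hk]
  have : ((-1 : ZMod p))^(8*k) = 1 := by
    rw [pow_mul]
    norm_num
  rw [this, one_mul]

/-- The coefficient of `(x₁x₂x₃x₄)^{p-1}` in `f^{p-1}` for the Calabi–Yau family in
`ℙ^{4,1,1,1,1}` over `𝔽_p[t₁,t]` for odd `p`: it is the Hasse–Witt invariant
`∑_k (8k)!/((k!)⁴(4k)!) · t^k · t₁^{p-1-8k}` reduced modulo `p`. -/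
theorem coeff_P41111_pow_zmod (p : ℕ) (hp : p.Prime) (hodd : Odd p)
    (t₁ t : MvPolynomial (Fin 2) (ZMod p)) (ht₁ : t₁ = X 0) (ht : t = X 1)
    (f : MvPolynomial (Fin 4) (MvPolynomial (Fin 2) (ZMod p)))
    (hf : f = - 1 - C t * (X 0) ^ 8 - (X 1) ^ 8 - (X 2) ^ 8 - (X 3) ^ 8
        + C t₁ * (X 0 * X 1 * X 2 * X 3)) :
    MvPolynomial.coeff (Finsupp.equivFunOnFinite.symm fun _ : Fin 4 => p - 1)
        (f ^ (p - 1)) =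
      ∑ k ∈ Finset.range ((p - 1) / 8 + 1),
        ((Nat.factorial (8 * k) /
            ((Nat.factorial k) ^ 4 * Nat.factorial (4 * k)) : ℕ) :
              MvPolynomial (Fin 2) (ZMod p)) *
          t ^ k * t₁ ^ (p - 1 - 8 * k) := by
  classical
  subst ht₁ ht hf
  set n := p - 1 with hn
  set T : Fin 4 →₀ ℕ := Finsupp.equivFunOnFinite.symm fun _ : Fin 4 => n with hT
  have hTj : ∀ j : Fin 4, T j = n := fun j => rfl
  rw [fCY_eq p, Finset.sum_pow_eq_sum_piAntidiag, MvPolynomial.coeff_sum]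
  have hcoeff : ∀ v ∈ piAntidiag (univ : Finset (Fin 6)) n,
      coeff T ((Nat.multinomial univ v : MvPolynomial (Fin 4) (MvPolynomial (Fin 2) (ZMod p)))
          * ∏ i : Fin 6, monomial (ddCY i) (ccCY p i) ^ v i) =
        if (∑ i : Fin 6, v i • ddCY i) = T then
          (Nat.multinomial univ v : MvPolynomial (Fin 2) (ZMod p))
            * ∏ i : Fin 6, ccCY p i ^ v i
        else 0 := by
    intro v _
    rw [prodCY, ← map_natCast (C : MvPolynomial (Fin 2) (ZMod p) →+*
        MvPolynomial (Fin 4) (MvPolynomial (Fin 2) (ZMod p))), coeff_C_mul, coeff_monomial,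
      mul_ite, mul_zero]
  rw [Finset.sum_congr rfl hcoeff, ← Finset.sum_filter]
  refine Finset.sum_nbij' (fun v => v 1) (fun k => ![4*k,k,k,k,k,n-8*k]) ?_ ?_ ?_ ?_ ?_
  · -- forward membership
    intro v hv
    simp only [mem_filter, mem_piAntidiag] at hv
    obtain ⟨⟨hsum, -⟩, hE⟩ := hv
    rw [Fin.sum_univ_six] at hsum
    have h0 := (DFunLike.congr_fun hE 0).trans (hTj 0); rw [E0CY] at h0
    rw [Finset.mem_range]
    show v 1 < n / 8 + 1
    omega
  · -- backward membership
    intro k hk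
    rw [Finset.mem_range] at hk
    have hk8 : 8 * k ≤ n := by omega
    simp only [mem_filter, mem_piAntidiag]
    refine ⟨⟨?_, fun i _ => mem_univ i⟩, ?_⟩
    · rw [Fin.sum_univ_six]
      show 4*k + k + k + k + k + (n - 8*k) = n
      omega
    · apply Finsupp.ext
      intro j
      fin_cases j
      · show (∑ i : Fin 6, (![4*k,k,k,k,k,n-8*k] : Fin 6 → ℕ) i • ddCY i) 0 = T 0
        rw [E0CY, hTj]; show 8 * k + (n - 8*k) = n; omega
      · show (∑ i : Fin 6, (![4*k,k,k,k,k,n-8*k] : Fin 6 → ℕ) i • ddCY i) 1 = T 1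
        rw [E1CY, hTj]; show 8 * k + (n - 8*k) = n; omega
      · show (∑ i : Fin 6, (![4*k,k,k,k,k,n-8*k] : Fin 6 → ℕ) i • ddCY i) 2 = T 2
        rw [E2CY, hTj]; show 8 * k + (n - 8*k) = n; omega
      · show (∑ i : Fin 6, (![4*k,k,k,k,k,n-8*k] : Fin 6 → ℕ) i • ddCY i) 3 = T 3
        rw [E3CY, hTj]; show 8 * k + (n - 8*k) = n; omega
  · -- left inverse
    intro v hv
    simp only [mem_filter, mem_piAntidiag] at hv
    obtain ⟨⟨hsum, -⟩, hE⟩ := hv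
    rw [Fin.sum_univ_six] at hsum
    have h0 := (DFunLike.congr_fun hE 0).trans (hTj 0); rw [E0CY] at h0
    have h1 := (DFunLike.congr_fun hE 1).trans (hTj 1); rw [E1CY] at h1
    have h2 := (DFunLike.congr_fun hE 2).trans (hTj 2); rw [E2CY] at h2
    have h3 := (DFunLike.congr_fun hE 3).trans (hTj 3); rw [E3CY] at h3
    funext x
    fin_cases x
    · show 4 * v 1 = v 0; omega
    · show v 1 = v 1; rfl
    · show v 1 = v 2; omega
    · show v 1 = v 3; omega
    · show v 1 = v 4; omega
    · show n - 8 * v 1 = v 5; omega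
  · -- right inverse
    intro k _
    rfl
  · -- values
    intro v hv
    simp only [mem_filter, mem_piAntidiag] at hv
    obtain ⟨⟨hsum, -⟩, hE⟩ := hv
    rw [Fin.sum_univ_six] at hsum
    have h0 := (DFunLike.congr_fun hE 0).trans (hTj 0); rw [E0CY] at h0
    have h1 := (DFunLike.congr_fun hE 1).trans (hTj 1); rw [E1CY] at h1
    have h2 := (DFunLike.congr_fun hE 2).trans (hTj 2); rw [E2CY] at h2
    have h3 := (DFunLike.congr_fun hE 3).trans (hTj 3); rw [E3CY] at h3
    have hk8 : 8 * v 1 ≤ n := by omega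
    have hveq : v = ![4*(v 1), v 1, v 1, v 1, v 1, n - 8 * v 1] := by
      funext x
      fin_cases x
      · show v 0 = 4 * v 1; omega
      · rfl
      · show v 2 = v 1; omega
      · show v 3 = v 1; omega
      · show v 4 = v 1; omega
      · show v 5 = n - 8 * v 1; omega
    rw [hveq, prodvalCY]
    have hcast : ((Nat.multinomial (univ : Finset (Fin 6))
          ![4*(v 1), v 1, v 1, v 1, v 1, n - 8 * v 1]) :
            MvPolynomial (Fin 2) (ZMod p)) =
        ((Nat.factorial (8 * v 1) /
          ((Nat.factorial (v 1)) ^ 4 * Nat.factorial (4 * v 1)) : ℕ) :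
            MvPolynomial (Fin 2) (ZMod p)) := by
      rw [← map_natCast (C : ZMod p →+* MvPolynomial (Fin 2) (ZMod p)),
        ← map_natCast (C : ZMod p →+* MvPolynomial (Fin 2) (ZMod p)),
        multCY p hp (v 1) hk8]
    rw [hcast, mul_assoc]
    rfl
end

section
/- Let p be a prime. In the polynomial ring ℤ[t₁, t, x₁, x₂, x₃, x₄], let f = −t − x₁⁶ − x₂⁶ − x₃³ − x₄⁶ + t₁·x₁x₂x₃x₄. Then the coefficient of the monomial (x₁x₂x₃x₄)^{p−1} in f^{p−1}, regarded as a polynomial in t₁ and t, equals ∑_{k=0}^{⌊(p−1)/6⌋} ((p−1)! / ((k!)⁴ · (2k)! · (p−1−6k)!)) · t^k · t₁^{p−1−6k}. -/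
set_option maxRecDepth 10000
open MvPolynomial Finset

private lemma cons_val_five' {α : Type*} {m : ℕ} (x : α) (u : Fin (m + 5) → α) :
    Matrix.vecCons x u 5 =
      Matrix.vecHead (Matrix.vecTail (Matrix.vecTail (Matrix.vecTail (Matrix.vecTail u)))) := rfl

noncomputable abbrev R2 : Type := MvPolynomial (Fin 2) ℤ

noncomputable def dd : Fin 6 → (Fin 4 →₀ ℕ) :=
  ![0, Finsupp.single 0 6, Finsupp.single 1 6, Finsupp.single 2 3, Finsupp.single 3 6,
    Finsupp.single 0 1 + Finsupp.single 1 1 + Finsupp.single 2 1 + Finsupp.single 3 1]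

noncomputable def cc (t₁ t : R2) : Fin 6 → R2 := ![-t, -1, -1, -1, -1, t₁]

def kap (n : ℕ) (a : ℕ) : Fin 6 → ℕ := ![a, a, a, 2 * a, a, n - 6 * a]

lemma cond_iff (n : ℕ) (k : Fin 6 → ℕ) :
    (k 0 • dd 0 + k 1 • dd 1 + k 2 • dd 2 + k 3 • dd 3 + k 4 • dd 4 + k 5 • dd 5 =
      Finsupp.equivFunOnFinite.symm fun _ : Fin 4 => n)
    ↔ (6 * k 1 + k 5 = n ∧ 6 * k 2 + k 5 = n ∧ 3 * k 3 + k 5 = n ∧ 6 * k 4 + k 5 = n) := by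
  rw [DFunLike.ext_iff]
  constructor
  · intro h
    have h0 := h 0
    have h1 := h 1
    have h2 := h 2
    have h3 := h 3
    simp [dd, cons_val_five', Finsupp.single_apply] at h0 h1 h2 h3
    refine ⟨by omega, by omega, by omega, by omega⟩
  · rintro ⟨h1, h2, h3, h4⟩ j
    fin_cases j <;> simp [dd, cons_val_five', Finsupp.single_apply] <;> omega

lemma key (n : ℕ) (t₁ t : R2) :
    coeff (Finsupp.equivFunOnFinite.symm fun _ : Fin 4 => n)
      ((- C t - (X 0)^6 - (X 1)^6 - (X 2)^3 - (X 3)^6 + C t₁ * (X 0 * X 1 * X 2 * X 3)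
        : MvPolynomial (Fin 4) R2) ^ n)
    = ∑ k ∈ Finset.range (n / 6 + 1),
        ((Nat.factorial n /
            ((Nat.factorial k) ^ 4 * Nat.factorial (2 * k) *
              Nat.factorial (n - 6 * k)) : ℕ) : R2) * t ^ k * t₁ ^ (n - 6 * k) := by
  classical
  have hrepr : (- C t - (X 0)^6 - (X 1)^6 - (X 2)^3 - (X 3)^6
      + C t₁ * (X 0 * X 1 * X 2 * X 3) : MvPolynomial (Fin 4) R2)
      = ∑ i : Fin 6, monomial (dd i) (cc t₁ t i) := by
    rw [Fin.sum_univ_six]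
    simp only [dd, cc, Matrix.cons_val_zero, Matrix.cons_val_one, Matrix.head_cons,
      Matrix.cons_val_two, Matrix.tail_cons, Matrix.cons_val_three, Matrix.cons_val_four,
      cons_val_five', map_neg, X_pow_eq_monomial, C_apply, X, monomial_mul,
      C_mul_monomial, monomial_pow, one_pow, mul_one, Finsupp.smul_single, smul_eq_mul,
      zero_add]
    ring
  rw [hrepr, Finset.sum_pow_eq_sum_piAntidiag, coeff_sum]
  simp only [Fin.prod_univ_six, monomial_pow, monomial_mul,
    ← map_natCast (C : R2 →+* MvPolynomial (Fin 4) R2), coeff_C_mul, coeff_monomial]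
  have hsub : (Finset.range (n / 6 + 1)).image (kap n) ⊆ piAntidiag (univ : Finset (Fin 6)) n := by
    intro k hk
    simp only [mem_image, mem_range] at hk
    obtain ⟨a, ha, rfl⟩ := hk
    rw [mem_piAntidiag]
    refine ⟨?_, fun i _ => mem_univ i⟩
    rw [Fin.sum_univ_six]
    simp only [kap, Matrix.cons_val_zero, Matrix.cons_val_one, Matrix.head_cons,
      Matrix.cons_val_two, Matrix.tail_cons, Matrix.cons_val_three, Matrix.cons_val_four,
      cons_val_five']
    omega
  rw [← Finset.sum_subset hsub]
  · rw [Finset.sum_image (fun x _ y _ h => by simpa [kap] using congr_fun h 0)]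
    refine Finset.sum_congr rfl fun a ha => ?_
    rw [mem_range] at ha
    have h6a : 6 * a ≤ n := by omega
    have hcond : (6 * kap n a 1 + kap n a 5 = n ∧ 6 * kap n a 2 + kap n a 5 = n ∧
        3 * kap n a 3 + kap n a 5 = n ∧ 6 * kap n a 4 + kap n a 5 = n) := by
      simp only [kap, Matrix.cons_val_zero, Matrix.cons_val_one, Matrix.head_cons,
        Matrix.cons_val_two, Matrix.tail_cons, Matrix.cons_val_three, Matrix.cons_val_four,
        cons_val_five']
      omega
    rw [if_pos ((cond_iff n (kap n a)).2 hcond)]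
    have hmult : Nat.multinomial (univ : Finset (Fin 6)) (kap n a)
        = n.factorial / (a.factorial ^ 4 * (2 * a).factorial * (n - 6 * a).factorial) := by
      rw [Nat.multinomial, Fin.sum_univ_six, Fin.prod_univ_six]
      simp only [kap, Matrix.cons_val_zero, Matrix.cons_val_one, Matrix.head_cons,
        Matrix.cons_val_two, Matrix.tail_cons, Matrix.cons_val_three, Matrix.cons_val_four,
        cons_val_five']
      rw [show a + a + a + 2 * a + a + (n - 6 * a) = n by omega]
      congr 1
      ring
    rw [hmult]
    simp only [kap, cc, Matrix.cons_val_zero, Matrix.cons_val_one, Matrix.head_cons,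
      Matrix.cons_val_two, Matrix.tail_cons, Matrix.cons_val_three, Matrix.cons_val_four,
      cons_val_five']
    rw [neg_pow t a]
    have e1 : ((-1 : R2)) ^ (2 * a) = 1 := by
      rw [pow_mul]; norm_num
    have e2 : ((-1 : R2)) ^ a * (-1) ^ a = 1 := by
      rw [← mul_pow]; norm_num
    rw [show ((-1 : R2)) ^ a * t ^ a * (-1) ^ a * (-1) ^ a * (-1) ^ (2 * a) * (-1) ^ a
          * t₁ ^ (n - 6 * a)
        = ((-1) ^ a * (-1) ^ a) * (((-1) ^ a * (-1) ^ a) * (-1) ^ (2 * a))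
          * (t ^ a * t₁ ^ (n - 6 * a)) by ring, e1, e2]
    ring
  · intro k hk hkS
    rw [mem_piAntidiag] at hk
    rw [if_neg, mul_zero]
    intro hcond
    obtain ⟨h1, h2, h3, h4⟩ := (cond_iff n k).1 hcond
    apply hkS
    have hsum : k 0 + k 1 + k 2 + k 3 + k 4 + k 5 = n := by
      rw [← hk.1, Fin.sum_univ_six]
    have hkeq : k = kap n (k 1) := by
      funext i
      fin_cases i <;> simp [kap, cons_val_five'] <;> omega
    rw [hkeq]
    exact mem_image_of_mem _ (mem_range.2 (by omega))

/-- The coefficient of `(x₁x₂x₃x₄)^{p-1}` in `f^{p-1}` for the Calabi–Yau family in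
`ℙ^{1,1,1,2,1}`, `f = -t - x₁⁶ - x₂⁶ - x₃³ - x₄⁶ + t₁·x₁x₂x₃x₄`, over `ℤ[t₁,t]`. -/
theorem coeff_P11121_pow_int (p : ℕ) (hp : p.Prime)
    (t₁ t : MvPolynomial (Fin 2) ℤ) (ht₁ : t₁ = X 0) (ht : t = X 1)
    (f : MvPolynomial (Fin 4) (MvPolynomial (Fin 2) ℤ))
    (hf : f = - C t - (X 0) ^ 6 - (X 1) ^ 6 - (X 2) ^ 3 - (X 3) ^ 6
        + C t₁ * (X 0 * X 1 * X 2 * X 3)) :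
    MvPolynomial.coeff (Finsupp.equivFunOnFinite.symm fun _ : Fin 4 => p - 1)
        (f ^ (p - 1)) =
      ∑ k ∈ Finset.range ((p - 1) / 6 + 1),
        ((Nat.factorial (p - 1) /
            ((Nat.factorial k) ^ 4 * Nat.factorial (2 * k) *
              Nat.factorial (p - 1 - 6 * k)) : ℕ) : MvPolynomial (Fin 2) ℤ) *
          t ^ k * t₁ ^ (p - 1 - 6 * k) := by
  rw [hf]
  exact key (p - 1) t₁ t
end

section
/- For every natural number k, the following identity holds in ℚ: (1/10)_k · (9/10)_k · (3/10)_k · (7/10)_k / (k!)⁴ = (1/(10^{3k}·5^{2k}·2^{5k})) · (10k)!/((k!)³·(2k)!·(5k)!), where (a)_k = a(a+1)(a+2)⋯(a+k−1) denotes the ascending Pochhammer symbol. -/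
/-!
Both sides are hypergeometric terms equal to `1` at `k = 0`, so it suffices that their ratios
of consecutive terms agree. On the factorial side, `(10k+10)!/(10k)!` is the product of
`10k+1, …, 10k+10`; its even factors cancel `2⁵ (5k+1)⋯(5k+5)` and the factor `10k+5` cancels
`5 (2k+1)`, leaving `(10k+1)(10k+3)(10k+7)(10k+9) / (10⁴ (k+1)⁴)`, which is the ratio of the
Pochhammer products.
-/

open Finset Nat

theorem Nat.cast_factorial_mul_add_one {R : Type*} [CommSemiring R] (m k : ℕ) :
    (((m * (k + 1))! : ℕ) : R) = (m * k)! * ∏ j ∈ range m, ((m * k : R) + j + 1) := by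
  rw [mul_add_one, ← factorial_mul_ascFactorial, ascFactorial_eq_prod_range]
  push_cast
  simp only [add_right_comm]

namespace P52111

noncomputable def pochhammerCoeff (k : ℕ) : ℚ :=
  (ascPochhammer ℚ k).eval (1/10) * (ascPochhammer ℚ k).eval (9/10) *
    (ascPochhammer ℚ k).eval (3/10) * (ascPochhammer ℚ k).eval (7/10) / (k ! : ℚ) ^ 4

def factorialCoeff (k : ℕ) : ℚ :=
  (1 / (10 ^ (3 * k) * 5 ^ (2 * k) * 2 ^ (5 * k))) *
    ((10 * k)! / ((k ! : ℚ) ^ 3 * (2 * k)! * (5 * k)!))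

def coeffRatio (k : ℕ) : ℚ :=
  (10 * k + 1) * (10 * k + 9) * (10 * k + 3) * (10 * k + 7) / (10 ^ 4 * (k + 1) ^ 4)

theorem pochhammerCoeff_succ (k : ℕ) :
    pochhammerCoeff (k + 1) = pochhammerCoeff k * coeffRatio k := by
  simp only [pochhammerCoeff, coeffRatio, ascPochhammer_succ_eval, factorial_succ]
  push_cast
  field_simp
  ring

theorem factorialCoeff_succ (k : ℕ) :
    factorialCoeff (k + 1) = factorialCoeff k * coeffRatio k := by
  simp only [factorialCoeff, coeffRatio]
  rw [cast_factorial_mul_add_one 10, cast_factorial_mul_add_one 2, cast_factorial_mul_add_one 5]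
  simp only [factorial_succ, prod_range_succ, prod_range_zero, mul_add_one, pow_add]
  push_cast
  field_simp
  ring

end P52111

/-- `(1/10)_k (9/10)_k (3/10)_k (7/10)_k / (k!)⁴
    = (1/(10^{3k}·5^{2k}·2^{5k})) · (10k)!/((k!)³(2k)!(5k)!)` in `ℚ`,
where `(a)_k` is the ascending Pochhammer symbol. -/
theorem pochhammer_P52111 (k : ℕ) :
    (ascPochhammer ℚ k).eval (1/10) * (ascPochhammer ℚ k).eval (9/10) *
        (ascPochhammer ℚ k).eval (3/10) * (ascPochhammer ℚ k).eval (7/10) /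
        ((Nat.factorial k : ℚ)) ^ 4 =
      (1 / (10 ^ (3 * k) * 5 ^ (2 * k) * 2 ^ (5 * k))) *
        ((Nat.factorial (10 * k) : ℚ) /
          (((Nat.factorial k : ℚ)) ^ 3 * (Nat.factorial (2 * k) : ℚ) *
            (Nat.factorial (5 * k) : ℚ))) := by
  change P52111.pochhammerCoeff k = P52111.factorialCoeff k
  induction k with
  | zero => simp [P52111.pochhammerCoeff, P52111.factorialCoeff]
  | succ k ih => rw [P52111.pochhammerCoeff_succ, P52111.factorialCoeff_succ, ih]
end

section
/- For every natural number k, the following identity holds in ℚ: (1/8)_k · (7/8)_k · (3/8)_k · (5/8)_k / (k!)⁴ = (1/(8^{4k}·2^{4k})) · (8k)!/((k!)⁴·(4k)!), where (a)_k = a(a+1)(a+2)⋯(a+k−1) denotes the ascending Pochhammer symbol. -/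
/-!
Since `8^k (r/8)_k = ∏_{j<k} (r + 8j)`, multiplying the four Pochhammer symbols by `8^{4k}` gives
the product of the odd numbers below `8k`, and that product is `(8k)! / (2^{4k} (4k)!)`.
-/

open Finset Nat

lemma pow_mul_ascPochhammer_eval_div {K : Type*} [Field K] {n : K} (hn : n ≠ 0) (a : K) (k : ℕ) :
    n ^ k * (ascPochhammer K k).eval (a / n) = ∏ j ∈ range k, (a + n * j) := by
  induction k with
  | zero => simp
  | succ k ih =>
    rw [ascPochhammer_succ_eval, prod_range_succ, ← ih]
    field_simp
    ring

lemma factorial_two_mul_eq_prod_odd (n : ℕ) :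
    (2 * n)! = 2 ^ n * n ! * ∏ j ∈ range n, (2 * j + 1) := by
  induction n with
  | zero => simp
  | succ n ih =>
    rw [show 2 * (n + 1) = 2 * n + 1 + 1 by ring, factorial_succ, factorial_succ, ih,
      prod_range_succ, factorial_succ]
    ring

lemma Finset.prod_range_mul_eq_prod_prod {M : Type*} [CommMonoid M] (f : ℕ → M) (m k : ℕ) :
    ∏ j ∈ range (m * k), f j = ∏ j ∈ range k, ∏ i ∈ range m, f (m * j + i) := by
  induction k with
  | zero => simp
  | succ k ih => rw [mul_add_one, prod_range_add, ih, prod_range_succ]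

lemma eight_pow_mul_ascPochhammer_odd_eighths (k : ℕ) :
    (8 : ℚ) ^ (4 * k) * ((ascPochhammer ℚ k).eval (1/8) * (ascPochhammer ℚ k).eval (7/8) *
      (ascPochhammer ℚ k).eval (3/8) * (ascPochhammer ℚ k).eval (5/8)) =
      ∏ j ∈ range (4 * k), (2 * j + 1 : ℚ) := by
  have h8 : (8 : ℚ) ≠ 0 := by norm_num
  rw [prod_range_mul_eq_prod_prod, mul_comm 4 k, pow_mul]
  calc _ = (8 ^ k * (ascPochhammer ℚ k).eval (1/8)) * (8 ^ k * (ascPochhammer ℚ k).eval (7/8)) *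
        (8 ^ k * (ascPochhammer ℚ k).eval (3/8)) * (8 ^ k * (ascPochhammer ℚ k).eval (5/8)) := by
        ring
    _ = _ := by
      simp only [pow_mul_ascPochhammer_eval_div h8, ← prod_mul_distrib]
      refine prod_congr rfl fun j _ => ?_
      simp only [prod_range_succ, prod_range_zero]
      push_cast
      ring

/-- `(1/8)_k (7/8)_k (3/8)_k (5/8)_k / (k!)⁴ = (1/(8^{4k}·2^{4k})) · (8k)!/((k!)⁴(4k)!)` in `ℚ`,
where `(a)_k` is the ascending Pochhammer symbol. -/
theorem pochhammer_P41111 (k : ℕ) :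
    (ascPochhammer ℚ k).eval (1/8) * (ascPochhammer ℚ k).eval (7/8) *
        (ascPochhammer ℚ k).eval (3/8) * (ascPochhammer ℚ k).eval (5/8) /
        ((Nat.factorial k : ℚ)) ^ 4 =
      (1 / (8 ^ (4 * k) * 2 ^ (4 * k))) *
        ((Nat.factorial (8 * k) : ℚ) /
          (((Nat.factorial k : ℚ)) ^ 4 * (Nat.factorial (4 * k) : ℚ))) := by
  have h8k : (8 * k)! = 2 ^ (4 * k) * (4 * k)! * ∏ j ∈ range (4 * k), (2 * j + 1) := by
    rw [show 8 * k = 2 * (4 * k) by ring, factorial_two_mul_eq_prod_odd]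
  have hk := factorial_ne_zero k
  have h4k := factorial_ne_zero (4 * k)
  rw [h8k]
  push_cast
  rw [← eight_pow_mul_ascPochhammer_odd_eighths]
  field_simp
end

section
/- For every natural number k, the following identity holds in ℚ: (1/6)_k · (5/6)_k · (2/6)_k · (4/6)_k / (k!)⁴ = (1/(6^{4k}·3^{2k})) · (6k)!/((k!)⁴·(2k)!), where (a)_k = a(a+1)(a+2)⋯(a+k−1) denotes the ascending Pochhammer symbol. -/
lemma poch_key (k : ℕ) :
    (ascPochhammer ℚ k).eval (1/6) * (ascPochhammer ℚ k).eval (5/6) *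
      (ascPochhammer ℚ k).eval (2/6) * (ascPochhammer ℚ k).eval (4/6) *
      6 ^ (4 * k) * 3 ^ (2 * k) * (Nat.factorial (2 * k) : ℚ) =
      (Nat.factorial (6 * k) : ℚ) := by
  induction k with
  | zero => simp [ascPochhammer]
  | succ n ih =>
    have h6 : 6 * (n + 1) = 6 * n + 1 + 1 + 1 + 1 + 1 + 1 := by ring
    have h2 : 2 * (n + 1) = 2 * n + 1 + 1 := by ring
    have h4 : 4 * (n + 1) = 4 * n + 4 := by ring
    rw [ascPochhammer_succ_eval, ascPochhammer_succ_eval, ascPochhammer_succ_eval,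
      ascPochhammer_succ_eval, h6, h2, h4, pow_add]
    simp only [Nat.factorial_succ, pow_succ]
    push_cast
    linear_combination ((6*(n:ℚ)+1)*(6*n+2)*(6*n+3)*(6*n+4)*(6*n+5)*(6*n+6)) * ih

/-- `(1/6)_k (5/6)_k (2/6)_k (4/6)_k / (k!)⁴ = (1/(6^{4k}·3^{2k})) · (6k)!/((k!)⁴(2k)!)` in `ℚ`,
where `(a)_k` is the ascending Pochhammer symbol. -/
theorem pochhammer_P11121 (k : ℕ) :
    (ascPochhammer ℚ k).eval (1/6) * (ascPochhammer ℚ k).eval (5/6) *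
        (ascPochhammer ℚ k).eval (2/6) * (ascPochhammer ℚ k).eval (4/6) /
        ((Nat.factorial k : ℚ)) ^ 4 =
      (1 / (6 ^ (4 * k) * 3 ^ (2 * k))) *
        ((Nat.factorial (6 * k) : ℚ) /
          (((Nat.factorial k : ℚ)) ^ 4 * (Nat.factorial (2 * k) : ℚ))) := by
  rw [← poch_key k]
  have h1 : ((Nat.factorial k : ℚ)) ≠ 0 := Nat.cast_ne_zero.mpr (Nat.factorial_ne_zero k)
  have h2 : ((Nat.factorial (2*k) : ℚ)) ≠ 0 := Nat.cast_ne_zero.mpr (Nat.factorial_ne_zero _)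
  have h3 : (6:ℚ) ^ (4*k) ≠ 0 := pow_ne_zero _ (by norm_num)
  have h4 : (3:ℚ) ^ (2*k) ≠ 0 := pow_ne_zero _ (by norm_num)
  field_simp
end

section
/- Let p be an odd prime and set m = (p−1)/2. In the polynomial ring ℤ[z][x], the coefficient of x^{p−1} in (x(x−1)(x−z))^m, regarded as a polynomial in z, equals (−1)^m · ∑_{k=0}^{m} C(m,k)² · z^k. -/
open Polynomial

/-- For an odd prime `p` and `m = (p-1)/2`, the coefficient of `x^{p-1}` in
`(x(x-1)(x-z))^m`, expanded in `ℤ[z][x]`, equals `(-1)^m · ∑_{k=0}^m C(m,k)² z^k`. -/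
theorem legendre_hasse_witt_int (p : ℕ) (hp : p.Prime) (hodd : Odd p)
    (m : ℕ) (hm : m = (p - 1) / 2) :
    ((((X : Polynomial (Polynomial ℤ)) * (X - 1) * (X - C (X : Polynomial ℤ))) ^ m).coeff
        (p - 1)) =
      (-1) ^ m * ∑ k ∈ Finset.range (m + 1),
        ((Nat.choose m k : Polynomial ℤ)) ^ 2 * (X : Polynomial ℤ) ^ k := by
  obtain ⟨t, ht⟩ := hodd
  have hp1 : p - 1 = m + m := by omega
  set z : Polynomial ℤ := X with hz
  have h1 : ((X : Polynomial (Polynomial ℤ)) * (X - 1) * (X - C z)) ^ m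
      = X ^ m * ((X - 1) ^ m * (X - C z) ^ m) := by
    rw [mul_pow, mul_pow, mul_assoc]
  rw [hp1, h1, coeff_X_pow_mul]
  rw [coeff_mul, Finset.Nat.sum_antidiagonal_eq_sum_range_succ_mk, Finset.mul_sum]
  refine Finset.sum_congr rfl fun i hi => ?_
  have hi' : i ≤ m := Nat.lt_succ_iff.mp (Finset.mem_range.mp hi)
  have e1 : ((X : Polynomial (Polynomial ℤ)) - 1) ^ m = (X + C (-1 : Polynomial ℤ)) ^ m := by
    simp [sub_eq_add_neg]
  have e2 : ((X : Polynomial (Polynomial ℤ)) - C z) ^ m = (X + C (-z)) ^ m := by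
    simp [sub_eq_add_neg]
  rw [e1, e2, coeff_X_add_C_pow, coeff_X_add_C_pow]
  simp only
  rw [show m - (m - i) = i by omega, Nat.choose_symm hi']
  rw [show ((-z) ^ i : Polynomial ℤ) = (-1) ^ i * z ^ i by rw [neg_pow]]
  rw [show ((-1 : Polynomial ℤ)) ^ (m - i) * ↑(m.choose i) * ((-1) ^ i * z ^ i * ↑(m.choose i))
      = ((-1 : Polynomial ℤ)) ^ (m - i + i) * ((m.choose i : Polynomial ℤ) ^ 2 * z ^ i) by
    rw [pow_add]; ring]
  rw [show m - i + i = m by omega]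
end

section
/- Let p be an odd prime and let k be a natural number with 0 ≤ k ≤ (p−1)/2. Then (−4)^k · C((p−1)/2, k) ≡ C(2k, k) (mod p); equivalently, in ℤ/pℤ the image of C(2k,k) equals (−4)^k times the image of C((p−1)/2, k). -/
/-- For an odd prime `p` and `0 ≤ k ≤ (p-1)/2`, one has
`(-4)^k · C((p-1)/2, k) ≡ C(2k, k) (mod p)`: in `ℤ/pℤ` the image of `C(2k,k)` equals
`(-4)^k` times the image of `C((p-1)/2, k)`. -/
theorem central_binom_eq_neg_four_pow_mul_choose (p : ℕ) (hp : p.Prime) (hodd : Odd p)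
    (k : ℕ) (hk : k ≤ (p - 1) / 2) :
    ((Nat.choose (2 * k) k : ZMod p)) = (-4) ^ k * (Nat.choose ((p - 1) / 2) k : ZMod p) := by
  have hpfact : Fact p.Prime := ⟨hp⟩
  set m := (p - 1) / 2 with hm
  have hp1 : 1 ≤ p := hp.one_lt.le
  have h2m : 2 * m = p - 1 := by
    obtain ⟨t, ht⟩ := hodd
    omega
  have hmlt : m < p := by omega
  have hM : (m : ZMod p) * 2 + 1 = 0 := by
    have h : ((2 * m + 1 : ℕ) : ZMod p) = 0 := by
      rw [show 2 * m + 1 = p by omega]; exact ZMod.natCast_self p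
    push_cast at h
    linear_combination h
  revert hk
  induction k with
  | zero => intro _; simp
  | succ k ih =>
    intro hk
    have hk' : k ≤ m := by omega
    have ih' := ih hk'
    have hne : ((k : ZMod p) + 1) ≠ 0 := by
      have h : (((k + 1 : ℕ)) : ZMod p) ≠ 0 := by
        simp only [Ne, ZMod.natCast_eq_zero_iff]
        intro h
        have := Nat.le_of_dvd (by omega) h
        omega
      push_cast at h
      exact h
    have h1 : ((k : ℕ) + 1) * ((2 * (k + 1)).choose (k + 1)) =
        2 * (2 * k + 1) * ((2 * k).choose k) := by
      have := Nat.succ_mul_centralBinom_succ k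
      simpa [Nat.centralBinom, Nat.mul_succ, Nat.succ_eq_add_one, mul_comm, mul_add] using this
    have h2 : m.choose (k + 1) * (k + 1) = m.choose k * (m - k) :=
      Nat.choose_succ_right_eq m k
    have e1 : ((k : ZMod p) + 1) * (((2 * (k + 1)).choose (k + 1) : ℕ) : ZMod p) =
        2 * (2 * (k : ZMod p) + 1) * (((2 * k).choose k : ℕ) : ZMod p) := by
      exact_mod_cast congrArg (Nat.cast : ℕ → ZMod p) h1 |>.trans (by push_cast; ring) |>.symm.symm
    have e2 : ((m.choose (k + 1) : ℕ) : ZMod p) * ((k : ZMod p) + 1) =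
        ((m.choose k : ℕ) : ZMod p) * ((m : ZMod p) - (k : ZMod p)) := by
      have := congrArg (Nat.cast : ℕ → ZMod p) h2
      push_cast [Nat.cast_sub hk'] at this
      exact this
    apply mul_left_cancel₀ hne
    linear_combination e1 + 2 * (2 * (k : ZMod p) + 1) * ih' - (-4 : ZMod p) ^ (k + 1) * e2 +
      2 * (-4 : ZMod p) ^ k * ((m.choose k : ℕ) : ZMod p) * hM
end

section
/- Let p be an odd prime with p > 3 and set m = (p−1)/2. In the polynomial ring 𝔽_p[z][x], the coefficient of x^{p−1} in (x(x−1)(x−z))^m, regarded as a polynomial in z over 𝔽_p, equals (−1)^m · ∑_{k=0}^{m} (C(2k,k) · u^k)² · z^k, where u denotes the multiplicative inverse of 4 in 𝔽_p and C(2k,k) is reduced modulo p. -/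
open Polynomial Finset

-- Nat fact: (2k)! = 2^k * k! * ∏(2i+1)
lemma fact_two_mul (k : ℕ) :
    (2 * k).factorial = 2 ^ k * k.factorial * ∏ i ∈ range k, (2 * i + 1) := by
  induction k with
  | zero => simp
  | succ k ih =>
      have h2 : 2 * (k + 1) = (2 * k + 1) + 1 := by ring
      rw [h2, Nat.factorial_succ, Nat.factorial_succ, ih, prod_range_succ,
        Nat.factorial_succ]
      ring

lemma choose_mul_fact (k : ℕ) :
    (2 * k).choose k * k.factorial = 2 ^ k * ∏ i ∈ range k, (2 * i + 1) := by
  have h := Nat.choose_mul_factorial_mul_factorial (show k ≤ 2 * k by omega)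
  have h2 : 2 * k - k = k := by omega
  rw [h2] at h
  have := fact_two_mul k
  apply Nat.eq_of_mul_eq_mul_right (Nat.factorial_pos k)
  rw [h, this]; ring

lemma key_s16 (p : ℕ) (hp : p.Prime) (m k : ℕ) (hmp : 2 * m + 1 = p) (hk : k ≤ m)
    (u : ZMod p) (hu : u * 4 = 1) :
    ((m.choose k : ZMod p)) ^ 2 = (((2 * k).choose k : ZMod p) * u ^ k) ^ 2 := by
  haveI : Fact p.Prime := ⟨hp⟩
  have hkp : k < p := by omega
  have hfac : (k.factorial : ZMod p) ≠ 0 := by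
    rw [Ne, ZMod.natCast_eq_zero_iff]
    intro h
    exact absurd ((Nat.Prime.dvd_factorial hp).mp h) (by omega)
  have h2m : (2 * m : ZMod p) = -1 := by
    have : ((2 * m + 1 : ℕ) : ZMod p) = 0 := by rw [hmp, ZMod.natCast_self]
    push_cast at this
    linear_combination this
  -- descFactorial cast
  have hdesc : ((m.descFactorial k : ZMod p)) * 2 ^ k
      = (-1) ^ k * ((∏ i ∈ range k, (2 * i + 1) : ℕ) : ZMod p) := by
    rw [Nat.descFactorial_eq_prod_range]
    push_cast
    rw [Finset.prod_congr rfl (fun i hi => Nat.cast_sub (by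
      have := Finset.mem_range.mp hi; omega) : ∀ i ∈ range k, ((m - i : ℕ) : ZMod p) = (m : ZMod p) - (i : ZMod p))]
    push_cast
    have e1 : (∏ i ∈ range k, ((m : ZMod p) - i)) * 2 ^ k
        = ∏ i ∈ range k, (((m : ZMod p) - i) * 2) := by
      rw [Finset.prod_mul_distrib, Finset.prod_const, Finset.card_range]
    have e2 : (-1 : ZMod p) ^ k * ∏ i ∈ range k, (2 * (i : ZMod p) + 1)
        = ∏ i ∈ range k, (-(2 * (i : ZMod p) + 1)) := by
      have : ∀ i ∈ range k, -(2 * (i : ZMod p) + 1) = (-1) * (2 * (i : ZMod p) + 1) :=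
        fun i _ => (neg_one_mul _).symm
      rw [Finset.prod_congr rfl this, Finset.prod_mul_distrib, Finset.prod_const,
        Finset.card_range]
    rw [e1, e2]
    apply Finset.prod_congr rfl
    intro i hi
    have h2 : (2 : ZMod p) * m = -1 := by push_cast at h2m; linear_combination h2m
    linear_combination h2
  have hA : (m.choose k : ZMod p) * 4 ^ k = (-1) ^ k * ((2 * k).choose k : ZMod p) := by
    apply mul_left_cancel₀ hfac
    have hd : ((m.descFactorial k : ℕ) : ZMod p)
        = (k.factorial : ZMod p) * (m.choose k : ZMod p) := by
      rw [Nat.descFactorial_eq_factorial_mul_choose]; push_cast; ring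
    have hc : (((2 * k).choose k : ℕ) : ZMod p) * (k.factorial : ZMod p)
        = 2 ^ k * ((∏ i ∈ range k, (2 * i + 1) : ℕ) : ZMod p) := by
      have := choose_mul_fact k
      have := congrArg (fun n : ℕ => (n : ZMod p)) this
      push_cast at this ⊢
      linear_combination this
    have h4 : (4 : ZMod p) ^ k = 2 ^ k * 2 ^ k := by
      rw [show (4 : ZMod p) = 2 * 2 by norm_num, mul_pow]
    calc (k.factorial : ZMod p) * ((m.choose k : ZMod p) * 4 ^ k)
        = ((m.descFactorial k : ℕ) : ZMod p) * 2 ^ k * 2 ^ k := by rw [hd, h4]; ring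
      _ = (-1) ^ k * ((∏ i ∈ range k, (2 * i + 1) : ℕ) : ZMod p) * 2 ^ k := by rw [hdesc]
      _ = (-1) ^ k * ((((2 * k).choose k : ℕ) : ZMod p) * (k.factorial : ZMod p)) := by
          rw [hc]; ring
      _ = (k.factorial : ZMod p) * ((-1) ^ k * ((2 * k).choose k : ZMod p)) := by
          push_cast; ring
  have hu4 : (u : ZMod p) ^ k * 4 ^ k = 1 := by
    rw [← mul_pow, hu, one_pow]
  have : (m.choose k : ZMod p) = (-1) ^ k * ((2 * k).choose k : ZMod p) * u ^ k := by
    calc (m.choose k : ZMod p) = (m.choose k : ZMod p) * (u ^ k * 4 ^ k) := by rw [hu4, mul_one]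
      _ = ((m.choose k : ZMod p) * 4 ^ k) * u ^ k := by ring
      _ = (-1) ^ k * ((2 * k).choose k : ZMod p) * u ^ k := by rw [hA]
  rw [this]
  ring_nf
  have hone : (-1 : ZMod p) ^ (k * 2) = 1 := Even.neg_one_pow ⟨k, by ring⟩
  rw [hone, mul_one]

/-- For a prime `p > 3` and `m = (p-1)/2`, the coefficient of `x^{p-1}` in
`(x(x-1)(x-z))^m`, expanded in `𝔽_p[z][x]`, equals
`(-1)^m · ∑_{k=0}^m (C(2k,k)·u^k)² z^k`, where `u` is the inverse of `4` in `𝔽_p`. -/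
theorem legendre_hasse_witt_zmod (p : ℕ) (hp : p.Prime) (hodd : Odd p) (hp3 : 3 < p)
    (m : ℕ) (hm : m = (p - 1) / 2)
    (u : ZMod p) (hu : u * 4 = 1) :
    ((((X : Polynomial (Polynomial (ZMod p))) * (X - 1) *
          (X - C (X : Polynomial (ZMod p)))) ^ m).coeff (p - 1)) =
      (-1) ^ m * ∑ k ∈ Finset.range (m + 1),
        (C (((Nat.choose (2 * k) k : ZMod p) * u ^ k) ^ 2)) *
          (X : Polynomial (ZMod p)) ^ k := by
  obtain ⟨t, ht⟩ := hodd
  have hmp : 2 * m + 1 = p := by omega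
  set R := Polynomial (ZMod p)
  set z : R := X with hz
  have hp1 : p - 1 = m + m := by omega
  have hfactor : ((X : Polynomial R) * (X - 1) * (X - C z)) ^ m
      = X ^ m * ((X - 1) ^ m * (X - C z) ^ m) := by
    rw [mul_pow, mul_pow, mul_assoc]
  rw [hfactor, hp1, coeff_X_pow_mul, coeff_mul,
    Finset.Nat.sum_antidiagonal_eq_sum_range_succ_mk, Finset.mul_sum]
  have h1 : (X - 1 : Polynomial R) = X + C (-1 : R) := by
    rw [map_neg, map_one]; ring
  have h2 : (X - C z : Polynomial R) = X + C (-z) := by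
    rw [map_neg]; ring
  refine Finset.sum_congr rfl fun k hk => ?_
  have hk' : k ≤ m := by
    have := Finset.mem_range.mp hk; omega
  rw [h1, h2, coeff_X_add_C_pow, coeff_X_add_C_pow, Nat.sub_sub_self hk',
    Nat.choose_symm hk']
  have hsign : (-1 : R) ^ (m - k) * (-1 : R) ^ k = (-1) ^ m := by
    rw [← pow_add, Nat.sub_add_cancel hk']
  have hcast : (m.choose k : R) = C ((m.choose k : ZMod p)) := by
    rw [map_natCast]
  have hkey := key_s16 p hp m k hmp hk' u hu
  have hC : C (((m.choose k : ZMod p)) ^ 2)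
      = C ((((2 * k).choose k : ZMod p) * u ^ k) ^ 2) := by rw [hkey]
  calc (-1 : R) ^ (m - k) * (m.choose k : R) * ((-z) ^ k * (m.choose k : R))
      = ((-1 : R) ^ (m - k) * (-1 : R) ^ k) * ((m.choose k : R) ^ 2 * z ^ k) := by
        rw [neg_pow]; ring
    _ = (-1 : R) ^ m * (C (((m.choose k : ZMod p)) ^ 2) * z ^ k) := by
        rw [hsign, hcast, map_pow]
    _ = (-1 : R) ^ m * (C ((((2 * k).choose k : ZMod p) * u ^ k) ^ 2) * z ^ k) := by
        rw [hC]
end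

section
/- Define the rational numbers c_k = (C(2k,k))²/16^k and g_k = 4·c_k·(H_{2k} − H_k) for k ∈ ℕ, where H_m = ∑_{j=1}^m 1/j is the m-th harmonic number (so g_0 = 0). Then for every natural number k, (k+1)²·g_{k+1} − (k+1/2)²·g_k = (2k+1)·c_k − 2(k+1)·c_{k+1}. Consequently, the formal power series G(z) = ∑_{k≥1} g_k z^k and F(z) = ∑_{k≥0} c_k z^k satisfy θ²G − z(θ+1/2)²G = z(2θ+1)F − 2θF, where θ = z·d/dz; this expresses that F(z)·ln(z) + G(z) is annihilated by the Picard–Fuchs operator θ² − z(θ+1/2)². -/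
open PowerSeries

/-!
With `d_k = H_{2k} - H_k`, so that `g_k = 4 c_k d_k`, the central binomial coefficients give
`4(k+1)² c_{k+1} = (2k+1)² c_k` and the harmonic numbers give
`d_{k+1} - d_k = 1/(2k+1) - 1/(2k+2)`. Substituting both into `(k+1)² g_{k+1} - (k+1/2)² g_k`,
the `d_k`-terms cancel and `(2k+1) c_k - 2(k+1) c_{k+1}` remains. The series identity is this
recurrence read off coefficientwise: `(k+1)² g_{k+1} - (k+1/2)² g_k` is the coefficient of
`z^{k+1}` in `θ²G - z(θ+1/2)²G`.
-/
/-- The Euler operator `θ = z·d/dz` on formal power series. -/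
noncomputable def eulerOp {R : Type*} [Semiring R] (P : R⟦X⟧) : R⟦X⟧ :=
  mk fun j => (j : R) * coeff j P

@[simp]
lemma coeff_eulerOp {R : Type*} [Semiring R] (n : ℕ) (P : R⟦X⟧) :
    coeff n (eulerOp P) = n * coeff n P :=
  coeff_mk _ _

lemma harmonic_two_mul_sub_harmonic_succ (k : ℕ) :
    harmonic (2 * (k + 1)) - harmonic (k + 1) =
      harmonic (2 * k) - harmonic k + (2 * (k : ℚ) + 1)⁻¹ - (2 * (k : ℚ) + 2)⁻¹ := by
  rw [show 2 * (k + 1) = 2 * k + 1 + 1 by ring, harmonic_succ, harmonic_succ, harmonic_succ]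
  push_cast
  field_simp
  ring

section

variable {K : Type*} [Field K] [CharZero K]

lemma four_mul_succ_sq_mul_centralBinom_sq_div (k : ℕ) :
    4 * ((k : K) + 1) ^ 2 * ((Nat.centralBinom (k + 1) : K) ^ 2 / 16 ^ (k + 1)) =
      (2 * (k : K) + 1) ^ 2 * ((Nat.centralBinom k : K) ^ 2 / 16 ^ k) := by
  have h : ((k : K) + 1) * Nat.centralBinom (k + 1) = 2 * (2 * k + 1) * Nat.centralBinom k := by
    exact_mod_cast Nat.succ_mul_centralBinom_succ k
  calc 4 * ((k : K) + 1) ^ 2 * ((Nat.centralBinom (k + 1) : K) ^ 2 / 16 ^ (k + 1))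
      _ = (((k : K) + 1) * Nat.centralBinom (k + 1)) ^ 2 / (4 * 16 ^ k) := by ring
      _ = _ := by rw [h]; field_simp; ring

lemma succ_sq_mul_sub_half_sq_mul_of_recurrence (c d : ℕ → K)
    (hc : ∀ k : ℕ, 4 * ((k : K) + 1) ^ 2 * c (k + 1) = (2 * (k : K) + 1) ^ 2 * c k)
    (hd : ∀ k, d (k + 1) = d k + (2 * (k : K) + 1)⁻¹ - (2 * (k : K) + 2)⁻¹) (k : ℕ) :
    ((k : K) + 1) ^ 2 * (4 * c (k + 1) * d (k + 1)) - ((k : K) + 1/2) ^ 2 * (4 * c k * d k) =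
      (2 * (k : K) + 1) * c k - 2 * ((k : K) + 1) * c (k + 1) := by
  have h₁ : (2 * (k : K) + 1) ≠ 0 := by norm_cast
  have h₂ : (2 * (k : K) + 2) ≠ 0 := by norm_cast
  rw [hd]
  linear_combination (d k + (2 * (k : K) + 1)⁻¹) * hc k
    + (2 * (k : K) + 1) * c k * mul_inv_cancel₀ h₁
    - (2 * (k : K) + 2) * c (k + 1) * mul_inv_cancel₀ h₂

lemma eulerOp_picardFuchs_of_recurrence (c g : ℕ → K)
    (h : ∀ k : ℕ, ((k : K) + 1) ^ 2 * g (k + 1) - ((k : K) + 1/2) ^ 2 * g k =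
      (2 * (k : K) + 1) * c k - 2 * ((k : K) + 1) * c (k + 1)) :
    eulerOp (eulerOp (mk g)) - X * (eulerOp (eulerOp (mk g)) + eulerOp (mk g) + C (1/4) * mk g) =
      X * (2 * eulerOp (mk c) + mk c) - 2 * eulerOp (mk c) := by
  rw [← map_ofNat C 2]
  ext (_ | k)
  · simp [-coeff_zero_eq_constantCoeff, coeff_zero_X_mul]
  · simp only [map_sub, map_add, coeff_succ_X_mul, coeff_C_mul, coeff_eulerOp, coeff_mk]
    push_cast
    linear_combination h k

end

/-- With `c_k = C(2k,k)²/16^k` and `g_k = 4·c_k·(H_{2k} - H_k)` (harmonic numbers `H_m`),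
one has `(k+1)²g_{k+1} - (k+1/2)²g_k = (2k+1)c_k - 2(k+1)c_{k+1}` for all `k`; consequently
the power series `G = ∑_{k≥1} g_k z^k` and `F = ∑_{k≥0} c_k z^k` satisfy
`θ²G - z(θ+1/2)²G = z(2θ+1)F - 2θF` where `θ = z·d/dz`, expressing that
`F·ln(z) + G` is annihilated by the Picard–Fuchs operator `θ² - z(θ+1/2)²`. -/
theorem legendre_log_period (H : ℕ → ℚ)
    (hH : ∀ m, H m = ∑ j ∈ Finset.range m, (1 : ℚ) / (j + 1))
    (c g : ℕ → ℚ)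
    (hc : ∀ k, c k = (Nat.choose (2 * k) k : ℚ) ^ 2 / 16 ^ k)
    (hg : ∀ k, g k = 4 * c k * (H (2 * k) - H k))
    (θ : PowerSeries ℚ → PowerSeries ℚ)
    (hθ : ∀ P, θ P = PowerSeries.mk fun j => (j : ℚ) * PowerSeries.coeff (R := ℚ) j P)
    (F G : PowerSeries ℚ) (hF : F = PowerSeries.mk c) (hG : G = PowerSeries.mk g) :
    (∀ k : ℕ, ((k : ℚ) + 1) ^ 2 * g (k + 1) - ((k : ℚ) + 1/2) ^ 2 * g k =
        (2 * (k : ℚ) + 1) * c k - 2 * ((k : ℚ) + 1) * c (k + 1)) ∧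
    θ (θ G) - PowerSeries.X * (θ (θ G) + θ G + PowerSeries.C (R := ℚ) (1/4) * G) =
      PowerSeries.X * (2 * θ F + F) - 2 * θ F := by
  obtain rfl : H = harmonic := funext fun m => by simp [hH, harmonic]
  obtain rfl : θ = eulerOp := funext hθ
  have hc' : c = fun k => (Nat.centralBinom k : ℚ) ^ 2 / 16 ^ k := funext hc
  have hg' : g = fun k => 4 * c k * (harmonic (2 * k) - harmonic k) := funext hg
  have hrec := succ_sq_mul_sub_half_sq_mul_of_recurrence c
    (fun k => harmonic (2 * k) - harmonic k)
    (by simpa only [hc'] using four_mul_succ_sq_mul_centralBinom_sq_div)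
    harmonic_two_mul_sub_harmonic_succ
  subst hF hG hg'
  exact ⟨hrec, eulerOp_picardFuchs_of_recurrence c _ hrec⟩
end
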